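/- arXiv:2012.07937 — 6 statements merged into one kernel-verified Lean document; each statement's English description precedes it below -/
import Mathlib

section
/- Let f : ℝ → ℝ be Lipschitz and 1-periodic, let φ be a bounded probability density with CDF Φ, and set Φ₂(t) := ∫ Φ(t+z)φ(z) dz and g(y) := ∫_0^1 Φ₂(y − f(x)) dx. Define M(θ) := ∫_0^1 g(f(t)) f(t−θ) dt. Then M is differentiable with M'(θ) = −∫_0^1 g(f(t+θ)) f'(t) dt (where f' denotes the almost-everywhere derivative of f), and M'(0) = 0. -/
/-!
Since `f` is Lipschitz, `θ ↦ g(f t) f(t - θ)` is Lipschitz for every `t`, so `M` may be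
differentiated under the integral sign. By periodicity `M θ'` is also the integral of the same
integrand over `[θ, θ + 1]`; differentiating that form at `θ' = θ` and substituting `t ↦ t + θ`
gives the stated derivative without any periodicity of `f'`. At `θ = 0` the derivative is
`-∫₀¹ g(f t) f'(t) dt = -∫_{f 0}^{f 1} g = 0`, by the change of variables formula for the
Lipschitz (hence absolutely continuous) substitution `f`. Both steps need only continuity of
`g`, which holds because `Φ` is continuous and bounded by `‖φ‖₁`.
-/

open MeasureTheory Set Filter

theorem continuous_setIntegral_Iic {φ : ℝ → ℝ} (hφ : Integrable φ) :
    Continuous fun t => ∫ z in Iic t, φ z := by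
  refine (continuous_congr fun t => ?_).2 ((continuous_const (y := ∫ z in Iic 0, φ z)).add
    (intervalIntegral.continuous_primitive (fun _ _ => hφ.intervalIntegrable) 0))
  simp only [Pi.add_apply]
  rw [← intervalIntegral.integral_Iic_sub_Iic hφ.integrableOn hφ.integrableOn, add_sub_cancel]

theorem abs_setIntegral_le_integral_abs {α : Type*} [MeasurableSpace α] {μ : Measure α}
    {φ : α → ℝ} (hφ : Integrable φ μ) (s : Set α) :
    |∫ z in s, φ z ∂μ| ≤ ∫ z, |φ z| ∂μ :=
  abs_integral_le_integral_abs.trans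
    (setIntegral_le_integral hφ.abs (Eventually.of_forall fun _ => abs_nonneg _))

theorem continuous_integral_comp_add_mul {Ψ φ : ℝ → ℝ} {C : ℝ} (hΨ : Continuous Ψ)
    (hΨC : ∀ s, |Ψ s| ≤ C) (hφ : Integrable φ) :
    Continuous fun t => ∫ z, Ψ (t + z) * φ z := by
  refine continuous_of_dominated (bound := fun z => C * |φ z|)
    (fun t => (hΨ.comp (continuous_const_add t)).aestronglyMeasurable.mul hφ.aestronglyMeasurable)
    (fun t => Eventually.of_forall fun z => ?_) (hφ.abs.const_mul C)
    (Eventually.of_forall fun z => (hΨ.comp (continuous_add_const z)).mul continuous_const)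
  rw [Real.norm_eq_abs, abs_mul]
  exact mul_le_mul_of_nonneg_right (hΨC _) (abs_nonneg _)

theorem hasDerivAt_intervalIntegral_mul_comp_sub {k u u' : ℝ → ℝ} {K : NNReal} {a b : ℝ}
    (hk : IntervalIntegrable k volume a b) (hu : LipschitzWith K u)
    (hu' : ∀ᵐ x, HasDerivAt u (u' x) x) (θ : ℝ) :
    HasDerivAt (fun θ => ∫ t in a..b, k t * u (t - θ))
      (-∫ t in a..b, k t * u' (t - θ)) θ := by
  have hshift : Measure.QuasiMeasurePreserving (fun t : ℝ => t - θ) volume volume :=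
    (measurePreserving_sub_right volume θ).quasiMeasurePreserving
  have hu'_meas : AEStronglyMeasurable u' volume :=
    (aestronglyMeasurable_deriv u volume).congr (hu'.mono fun x hx => hx.deriv)
  have hlip (t : ℝ) : LipschitzWith (Real.nnabs (‖k t‖ * K)) fun θ => k t * u (t - θ) :=
    LipschitzWith.of_dist_le_mul fun x y => by
      have h := hu.dist_le_mul (t - x) (t - y)
      rw [dist_sub_left, dist_eq_norm] at h
      rw [Real.coe_nnabs, abs_of_nonneg (by positivity), dist_eq_norm, ← mul_sub, norm_mul,
        mul_assoc]
      gcongr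
  have hdiff : ∀ᵐ t, HasDerivAt (fun θ => k t * u (t - θ)) (-(k t * u' (t - θ))) θ := by
    filter_upwards [hshift.ae hu'] with t ht
    simpa using (ht.comp θ ((hasDerivAt_id θ).const_sub t)).const_mul (k t)
  have key := intervalIntegral.hasDerivAt_integral_of_dominated_loc_of_lip
    (F := fun θ t => k t * u (t - θ)) (F' := fun t => -(k t * u' (t - θ))) univ_mem
    (Eventually.of_forall fun θ => hk.def'.aestronglyMeasurable.mul
      (hu.continuous.comp (continuous_sub_right θ)).aestronglyMeasurable)
    (hk.mul_continuousOn (hu.continuous.comp (continuous_sub_right θ)).continuousOn)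
    (hk.def'.aestronglyMeasurable.mul (hu'_meas.comp_quasiMeasurePreserving hshift).restrict).neg
    (Eventually.of_forall fun t _ => (hlip t).lipschitzOnWith)
    (hk.norm.mul_const _)
    (hdiff.mono fun t ht _ => ht)
  simpa only [intervalIntegral.integral_neg] using key.2

theorem intervalIntegral.integral_comp_mul_deriv_of_locallyLipschitz {f f' g : ℝ → ℝ} {a b : ℝ}
    (hf : LocallyLipschitz f) (hf' : ∀ᵐ x, HasDerivAt f (f' x) x) (hg : Continuous g) :
    ∫ x in a..b, g (f x) * f' x = ∫ y in f a..f b, g y := by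
  set G := fun y => ∫ s in (0 : ℝ)..y, g s
  have hG (y : ℝ) : HasDerivAt G (g y) y := (hg.integral_hasStrictDerivAt 0 y).hasDerivAt
  have hG_C1 : ContDiff ℝ 1 G :=
    contDiff_one_iff_deriv.2 ⟨fun y => (hG y).differentiableAt, by
      rwa [show deriv G = g from funext fun y => (hG y).deriv]⟩
  obtain ⟨K, hK⟩ := (hG_C1.locallyLipschitz.comp hf).locallyLipschitzOn
    |>.exists_lipschitzOnWith_of_compact (isCompact_uIcc (a := a) (b := b))
  calc ∫ x in a..b, g (f x) * f' x = ∫ x in a..b, deriv (G ∘ f) x :=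
        integral_congr_ae (hf'.mono fun x hx _ => ((hG (f x)).comp x hx).deriv.symm)
    _ = G (f b) - G (f a) := hK.absolutelyContinuousOnInterval.integral_deriv_eq_sub
    _ = ∫ y in f a..f b, g y :=
        integral_interval_sub_left (hg.intervalIntegrable _ _) (hg.intervalIntegrable _ _)

theorem M_differentiable_and_critical_at_zero_general
    (f f' φ Φ Φ₂ g M : ℝ → ℝ) (L : NNReal)
    (hf : LipschitzWith L f)
    (hper : ∀ x, f (x + 1) = f x)
    (hf' : ∀ᵐ x, HasDerivAt f (f' x) x)
    (hφint : Integrable φ)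
    (hΦ : ∀ t, Φ t = ∫ z in Set.Iic t, φ z)
    (hΦ₂ : ∀ t, Φ₂ t = ∫ z, Φ (t + z) * φ z)
    (hg : ∀ y, g y = ∫ x in (0:ℝ)..1, Φ₂ (y - f x))
    (hM : ∀ θ, M θ = ∫ t in (0:ℝ)..1, g (f t) * f (t - θ)) :
    (∀ θ, HasDerivAt M (-(∫ t in (0:ℝ)..1, g (f (t + θ)) * f' t)) θ) ∧
    (-(∫ t in (0:ℝ)..1, g (f t) * f' t)) = 0 := by
  have hf_cont := hf.continuous
  have hΦ_cont : Continuous Φ := by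
    simpa only [← funext hΦ] using continuous_setIntegral_Iic hφint
  have hΦ₂_cont : Continuous Φ₂ := by
    simpa only [← funext hΦ₂] using continuous_integral_comp_add_mul hΦ_cont
      (fun s => (hΦ s).symm ▸ abs_setIntegral_le_integral_abs hφint (Iic s)) hφint
  have hg_cont : Continuous g := by
    simpa only [← funext hg] using
      (by fun_prop : Continuous fun y => ∫ x in (0:ℝ)..1, Φ₂ (y - f x))
  refine ⟨fun θ => ?_, ?_⟩
  · have hM_shift : M = fun θ' => ∫ t in θ..θ + 1, g (f t) * f (t - θ') := funext fun θ' => by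
      simpa [hM] using ((Function.Periodic.comp hper g).mul (Function.Periodic.sub_const hper θ'))
        |>.intervalIntegral_add_eq 0 θ
    rw [hM_shift]
    refine (hasDerivAt_intervalIntegral_mul_comp_sub (k := fun t => g (f t)) (a := θ)
      (b := θ + 1) ((hg_cont.comp hf_cont).intervalIntegrable _ _) hf hf' θ).congr_deriv ?_
    have h_subst := intervalIntegral.integral_comp_add_right
      (fun t => g (f t) * f' (t - θ)) θ (a := 0) (b := 1)
    simp only [add_sub_cancel_right, zero_add] at h_subst
    rw [h_subst, add_comm 1 θ]
  · rw [intervalIntegral.integral_comp_mul_deriv_of_locallyLipschitz hf.locallyLipschitz hf'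
      hg_cont, ← zero_add (1 : ℝ), hper, intervalIntegral.integral_same, neg_zero]

theorem M_differentiable_and_critical_at_zero
    (f f' φ Φ Φ₂ g M : ℝ → ℝ) (L : NNReal)
    (hf : LipschitzWith L f)
    (hper : ∀ x, f (x + 1) = f x)
    (hf' : ∀ᵐ x, HasDerivAt f (f' x) x)
    (hφmeas : Measurable φ)
    (hφnonneg : ∀ z, 0 ≤ φ z)
    (hφint : Integrable φ)
    (hφone : ∫ z, φ z = 1)
    (hφbdd : BddAbove (Set.range φ))
    (hΦ : ∀ t, Φ t = ∫ z in Set.Iic t, φ z)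
    (hΦ₂ : ∀ t, Φ₂ t = ∫ z, Φ (t + z) * φ z)
    (hg : ∀ y, g y = ∫ x in (0:ℝ)..1, Φ₂ (y - f x))
    (hM : ∀ θ, M θ = ∫ t in (0:ℝ)..1, g (f t) * f (t - θ)) :
    (∀ θ, HasDerivAt M (-(∫ t in (0:ℝ)..1, g (f (t + θ)) * f' t)) θ) ∧
    (-(∫ t in (0:ℝ)..1, g (f t) * f' t)) = 0 :=
  M_differentiable_and_critical_at_zero_general f f' φ Φ Φ₂ g M L hf hper hf' hφint hΦ hΦ₂ hg hM
end

section
/- With notation as above, g is differentiable with g'(y) = ∫_0^1 ∫_{-∞}^{∞} φ(z + y − f(x)) φ(z) dz dx, and g'(y) ≥ 0 for all y. If moreover φ(z) > 0 for all z, then g'(y) > 0 for all y. -/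
/-!
By the fundamental theorem of calculus `Φ' = φ`, a bounded function, so differentiating under the
integral sign gives `Φ₂' t = ∫ φ (z + t) φ z dz`. This is bounded by `(sup φ) ∫ φ`, so we may
differentiate under the integral sign once more, now in `g`. The resulting integrands are
non-negative, and positive when `φ` is.
-/

open MeasureTheory Set

theorem hasDerivAt_integral_comp_add_mul {α : Type*} [MeasurableSpace α] {μ : Measure α}
    {F F' : ℝ → ℝ} {u w : α → ℝ} {K y : ℝ} (hF : ∀ t, HasDerivAt F (F' t) t)
    (hF' : ∀ t, ‖F' t‖ ≤ K) (hu : Measurable u) (hw : Integrable w μ)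
    (hFw : Integrable (fun x ↦ F (y + u x) * w x) μ) :
    Integrable (fun x ↦ F' (y + u x) * w x) μ ∧
      HasDerivAt (fun y ↦ ∫ x, F (y + u x) * w x ∂μ) (∫ x, F' (y + u x) * w x ∂μ) y := by
  have hF_meas : Measurable F :=
    (continuous_iff_continuousAt.2 fun t ↦ (hF t).continuousAt).measurable
  have hF'_meas : Measurable F' := by
    rw [← deriv_eq hF]
    exact measurable_deriv F
  refine hasDerivAt_integral_of_dominated_loc_of_deriv_le (F := fun y x ↦ F (y + u x) * w x)
    (F' := fun y x ↦ F' (y + u x) * w x) (bound := fun x ↦ K * ‖w x‖) Filter.univ_mem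
    (.of_forall fun s ↦ ?_) hFw ?_ (.of_forall fun x s _ ↦ ?_) (hw.norm.const_mul K)
    (.of_forall fun x s _ ↦ ?_)
  · exact (hF_meas.comp (measurable_const.add hu)).aestronglyMeasurable.mul hw.aestronglyMeasurable
  · exact (hF'_meas.comp (measurable_const.add hu)).aestronglyMeasurable.mul hw.aestronglyMeasurable
  · rw [norm_mul]
    exact mul_le_mul_of_nonneg_right (hF' _) (norm_nonneg _)
  · exact ((hF (s + u x)).comp_add_const s (u x)).mul_const (w x)

theorem hasDerivAt_intervalIntegral_comp_sub {G G' f : ℝ → ℝ} {K a b y : ℝ}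
    (hG : ∀ t, HasDerivAt G (G' t) t) (hG' : ∀ t, ‖G' t‖ ≤ K) (hf : Continuous f) :
    IntervalIntegrable (fun x ↦ G' (y - f x)) volume a b ∧
      HasDerivAt (fun y ↦ ∫ x in a..b, G (y - f x)) (∫ x in a..b, G' (y - f x)) y := by
  have hG_cont : Continuous G := continuous_iff_continuousAt.2 fun t ↦ (hG t).continuousAt
  obtain ⟨hint, hderiv⟩ := hasDerivAt_integral_comp_add_mul (μ := volume.restrict (uIoc a b))
    (u := fun x ↦ -f x) (w := fun _ ↦ 1) (y := y) hG hG' hf.measurable.neg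
    continuous_const.integrableOn_uIoc ((hG_cont.comp (continuous_const.add hf.neg)).mul
      continuous_const).integrableOn_uIoc
  simp only [mul_one, ← sub_eq_add_neg] at hint hderiv
  simp only [intervalIntegrable_iff, intervalIntegral.intervalIntegral_eq_integral_uIoc,
    smul_eq_mul]
  exact ⟨hint, hderiv.const_mul _⟩

theorem hasDerivAt_integral_Iic {E : Type*} [NormedAddCommGroup E] [NormedSpace ℝ E]
    [CompleteSpace E] {φ : ℝ → E} (hφ_cont : Continuous φ) (hφ_int : Integrable φ) (t : ℝ) :
    HasDerivAt (fun s ↦ ∫ z in Iic s, φ z) (φ t) t := by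
  have h : (fun s ↦ ∫ z in Iic s, φ z) = fun s ↦ (∫ z in Iic 0, φ z) + ∫ z in 0..s, φ z := by
    funext s
    rw [← intervalIntegral.integral_Iic_sub_Iic hφ_int.integrableOn hφ_int.integrableOn]
    abel
  rw [h]
  exact (intervalIntegral.integral_hasDerivAt_right hφ_int.intervalIntegrable
    hφ_cont.stronglyMeasurable.stronglyMeasurableAtFilter hφ_cont.continuousAt).const_add _

section Density

variable {φ : ℝ → ℝ} {C : ℝ}

theorem norm_integral_Iic_le (hφ_nonneg : ∀ z, 0 ≤ φ z) (hφ_int : Integrable φ) (t : ℝ) :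
    ‖∫ z in Iic t, φ z‖ ≤ ∫ z, φ z := by
  rw [Real.norm_of_nonneg (setIntegral_nonneg measurableSet_Iic fun z _ ↦ hφ_nonneg z)]
  exact setIntegral_le_integral hφ_int (.of_forall hφ_nonneg)

theorem integrable_comp_add_mul (hφ_cont : Continuous φ) (hφ_int : Integrable φ)
    (hφ_le : ∀ z, ‖φ z‖ ≤ C) (t : ℝ) : Integrable (fun z ↦ φ (z + t) * φ z) :=
  hφ_int.bdd_mul (hφ_cont.comp (continuous_add_const t)).aestronglyMeasurable
    (.of_forall fun _ ↦ hφ_le _)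

theorem norm_integral_comp_add_mul_le (hφ_nonneg : ∀ z, 0 ≤ φ z) (hφ_int : Integrable φ)
    (hφ_le : ∀ z, ‖φ z‖ ≤ C) (t : ℝ) : ‖∫ z, φ (z + t) * φ z‖ ≤ C * ∫ z, φ z := by
  rw [← integral_const_mul]
  refine norm_integral_le_of_norm_le (hφ_int.const_mul C) (.of_forall fun z ↦ ?_)
  rw [norm_mul, Real.norm_of_nonneg (hφ_nonneg z)]
  exact mul_le_mul_of_nonneg_right (hφ_le _) (hφ_nonneg z)

theorem integral_comp_add_mul_pos (hφ_cont : Continuous φ) (hφ_pos : ∀ z, 0 < φ z)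
    (hφ_int : Integrable φ) (hφ_le : ∀ z, ‖φ z‖ ≤ C) (t : ℝ) :
    0 < ∫ z, φ (z + t) * φ z :=
  integral_pos_of_integrable_nonneg_nonzero (x := 0) (by fun_prop)
    (integrable_comp_add_mul hφ_cont hφ_int hφ_le t)
    (fun z ↦ (mul_pos (hφ_pos _) (hφ_pos z)).le) (mul_pos (hφ_pos _) (hφ_pos 0)).ne'

theorem hasDerivAt_integral_integral_Iic_add_mul (hφ_cont : Continuous φ)
    (hφ_nonneg : ∀ z, 0 ≤ φ z) (hφ_int : Integrable φ) (hφ_le : ∀ z, ‖φ z‖ ≤ C) (t : ℝ) :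
    HasDerivAt (fun r ↦ ∫ z, (∫ s in Iic (r + z), φ s) * φ z) (∫ z, φ (z + t) * φ z) t := by
  have hΦ' := hasDerivAt_integral_Iic hφ_cont hφ_int
  have hΦ_cont : Continuous fun t ↦ ∫ s in Iic t, φ s :=
    continuous_iff_continuousAt.2 fun t ↦ (hΦ' t).continuousAt
  have := (hasDerivAt_integral_comp_add_mul hΦ' hφ_le measurable_id hφ_int
    (hφ_int.bdd_mul (hΦ_cont.comp (continuous_const_add t)).aestronglyMeasurable
      (.of_forall fun z ↦ norm_integral_Iic_le hφ_nonneg hφ_int _))).2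
  simpa only [id, add_comm t] using this

end Density

theorem g_differentiable_nonneg_deriv_general
    (f φ Φ Φ₂ g : ℝ → ℝ) (L : NNReal)
    (hf : LipschitzWith L f)
    (hφcont : Continuous φ)
    (hφnonneg : ∀ z, 0 ≤ φ z)
    (hφint : Integrable φ)
    (hφbdd : BddAbove (Set.range φ))
    (hΦ : ∀ t, Φ t = ∫ z in Set.Iic t, φ z)
    (hΦ₂ : ∀ t, Φ₂ t = ∫ z, Φ (t + z) * φ z)
    (hg : ∀ y, g y = ∫ x in (0:ℝ)..1, Φ₂ (y - f x)) :
    (∀ y, HasDerivAt g (∫ x in (0:ℝ)..1, ∫ z, φ (z + y - f x) * φ z) y) ∧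
    (∀ y, 0 ≤ ∫ x in (0:ℝ)..1, ∫ z, φ (z + y - f x) * φ z) ∧
    ((∀ z, 0 < φ z) → ∀ y, 0 < ∫ x in (0:ℝ)..1, ∫ z, φ (z + y - f x) * φ z) := by
  obtain ⟨C, hC⟩ := hφbdd
  have hφ_le : ∀ z, ‖φ z‖ ≤ C := fun z ↦ (Real.norm_of_nonneg (hφnonneg z)).trans_le (hC ⟨z, rfl⟩)
  have hΦ₂' : ∀ t, HasDerivAt Φ₂ (∫ z, φ (z + t) * φ z) t := by
    simpa only [← hΦ, ← hΦ₂] using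
      hasDerivAt_integral_integral_Iic_add_mul hφcont hφnonneg hφint hφ_le
  have hg' (y : ℝ) := hasDerivAt_intervalIntegral_comp_sub (a := 0) (b := 1) (y := y) hΦ₂'
    (norm_integral_comp_add_mul_le hφnonneg hφint hφ_le) hf.continuous
  simp only [← add_sub_assoc, ← hg] at hg'
  refine ⟨fun y ↦ (hg' y).2, fun y ↦ ?_, fun hφ_pos y ↦ ?_⟩
  · exact intervalIntegral.integral_nonneg zero_le_one fun x _ ↦
      integral_nonneg fun z ↦ mul_nonneg (hφnonneg _) (hφnonneg z)
  · refine intervalIntegral.intervalIntegral_pos_of_pos_on (hg' y).1 (fun x _ ↦ ?_) zero_lt_one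
    simpa only [add_sub_assoc] using integral_comp_add_mul_pos hφcont hφ_pos hφint hφ_le (y - f x)

theorem g_differentiable_nonneg_deriv
    (f φ Φ Φ₂ g : ℝ → ℝ) (L : NNReal)
    (hf : LipschitzWith L f)
    (hper : ∀ x, f (x + 1) = f x)
    (hφcont : Continuous φ)
    (hφnonneg : ∀ z, 0 ≤ φ z)
    (hφint : Integrable φ)
    (hφone : ∫ z, φ z = 1)
    (hφbdd : BddAbove (Set.range φ))
    (hΦ : ∀ t, Φ t = ∫ z in Set.Iic t, φ z)
    (hΦ₂ : ∀ t, Φ₂ t = ∫ z, Φ (t + z) * φ z)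
    (hg : ∀ y, g y = ∫ x in (0:ℝ)..1, Φ₂ (y - f x)) :
    (∀ y, HasDerivAt g (∫ x in (0:ℝ)..1, ∫ z, φ (z + y - f x) * φ z) y) ∧
    (∀ y, 0 ≤ ∫ x in (0:ℝ)..1, ∫ z, φ (z + y - f x) * φ z) ∧
    ((∀ z, 0 < φ z) → ∀ y, 0 < ∫ x in (0:ℝ)..1, ∫ z, φ (z + y - f x) * φ z) :=
  g_differentiable_nonneg_deriv_general f φ Φ Φ₂ g L hf hφcont hφnonneg hφint hφbdd hΦ hΦ₂ hg
end

section
/- With notation as above and assuming φ is everywhere positive, continuous and bounded, and f is Lipschitz, 1-periodic and nonconstant, the second derivative of M at 0 satisfies M''(0) = −∫_0^1 g'(f(t)) f'(t)² dt < 0; hence θ* = 0 is a strict local maximizer of M. -/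
/-!
Differentiating under the integral sign and using 1-periodicity to move the shift from `f` onto
`g ∘ f` gives `M'(θ) = -∫₀¹ g (f (t + θ)) f'(t) dt`. At `θ = 0` this is minus the increment of the
Lipschitz function `G ∘ f` (with `G' = g`) over one period, hence `0`. Since
`g' y = ∫₀¹ φ₂ (y - f x) dx`, where `φ₂` is the density of the difference of two independent
`φ`-distributed variables, `g'` is positive and bounded, so `g ∘ f` is Lipschitz and a second
differentiation gives `M''(0) = -∫₀¹ g'(f t) f'(t)² dt`; this is negative because `f' ≠ 0` on a set
of positive measure. The second-derivative test, in its strict form, finishes the proof.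
-/

open MeasureTheory Set Filter Topology
open scoped NNReal

theorem lipschitzWith_of_hasDerivAt_of_abs_le {u u' : ℝ → ℝ} {C : ℝ≥0}
    (hu : ∀ x, HasDerivAt u (u' x) x) (hC : ∀ x, |u' x| ≤ C) : LipschitzWith C u :=
  lipschitzWith_of_nnnorm_deriv_le (fun x => (hu x).differentiableAt) fun x => by
    rw [← NNReal.coe_le_coe, coe_nnnorm, (hu x).deriv]
    exact hC x

theorem Function.Periodic.deriv {f : ℝ → ℝ} {T : ℝ} (hf : Function.Periodic f T) :
    Function.Periodic (deriv f) T := fun x => by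
  rw [← deriv_comp_add_const, show (fun y => f (y + T)) = f from funext hf]

theorem Function.Periodic.intervalIntegral_comp_add_right {u : ℝ → ℝ} {T : ℝ}
    (hu : Function.Periodic u T) (a θ : ℝ) :
    ∫ t in a..a + T, u (t + θ) = ∫ t in a..a + T, u t := by
  rw [intervalIntegral.integral_comp_add_right, add_right_comm, hu.intervalIntegral_add_eq]

theorem intervalIntegral_mem_Icc_of_forall_mem_Icc {u : ℝ → ℝ} {a b : ℝ}
    (hu : IntervalIntegrable u volume 0 1) (hab : ∀ x, u x ∈ Icc a b) :
    ∫ x in (0 : ℝ)..1, u x ∈ Icc a b := by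
  constructor
  · simpa using intervalIntegral.integral_mono_on zero_le_one intervalIntegrable_const hu
      fun x _ => (hab x).1
  · simpa using intervalIntegral.integral_mono_on zero_le_one hu intervalIntegrable_const
      fun x _ => (hab x).2

theorem intervalIntegral_pos_of_measure_Icc_support_pos {u : ℝ → ℝ} {a b : ℝ}
    (hu0 : 0 ≤ᵐ[volume] u) (hui : IntervalIntegrable u volume a b)
    (hpos : 0 < volume {t | t ∈ Icc a b ∧ u t ≠ 0}) : 0 < ∫ t in a..b, u t := by
  have hIoc : volume {t | t ∈ Icc a b ∧ u t ≠ 0} = volume (Ioc a b ∩ Function.support u) :=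
    measure_congr (Ioc_ae_eq_Icc.symm.inter EventuallyEq.rfl)
  rw [intervalIntegral.integral_pos_iff_support_of_nonneg_ae hu0 hui, inter_comm, ← hIoc]
  refine ⟨lt_of_not_ge fun hba => hpos.ne' ?_, hpos⟩
  rw [hIoc, Ioc_eq_empty hba.not_gt, empty_inter, measure_empty]

theorem hasDerivAt_integral_comp_add_mul_s6 {μ : Measure ℝ} (hμ : μ ≪ volume)
    {h h' w : ℝ → ℝ} {K : ℝ≥0} {θ₀ : ℝ}
    (hh : LipschitzWith K h) (hh' : ∀ᵐ x, HasDerivAt h (h' x) x)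
    (hw : Integrable w μ) (hhw : Integrable (fun t => h (t + θ₀) * w t) μ) :
    HasDerivAt (fun θ => ∫ t, h (t + θ) * w t ∂μ) (∫ t, h' (t + θ₀) * w t ∂μ) θ₀ := by
  have hshift : ∀ᵐ t ∂μ, HasDerivAt h (h' (t + θ₀)) (t + θ₀) :=
    hμ.ae_le ((measurePreserving_add_right volume θ₀).quasiMeasurePreserving.ae hh')
  have h'meas : AEStronglyMeasurable (fun t => h' (t + θ₀)) μ :=
    ((measurable_deriv h).comp (measurable_add_const θ₀)).aestronglyMeasurable.congr
      (hshift.mono fun t ht => ht.deriv)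
  refine (hasDerivAt_integral_of_dominated_loc_of_lip (F := fun θ t => h (t + θ) * w t)
    (bound := fun t => K * |w t|) univ_mem (Eventually.of_forall fun θ =>
      (hh.continuous.comp (continuous_add_const θ)).aestronglyMeasurable.mul hw.1)
    hhw (h'meas.mul hw.1) (Eventually.of_forall fun t => ?_) (hw.norm.const_mul K)
    (hshift.mono fun t ht => ?_)).2
  · refine LipschitzWith.lipschitzOnWith (LipschitzWith.of_dist_le_mul fun x y => ?_)
    have hxy := hh.dist_le_mul (t + x) (t + y)
    rw [Real.dist_eq, Real.dist_eq, add_sub_add_left_eq_sub] at hxy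
    rw [Real.coe_nnabs, abs_of_nonneg (by positivity), Real.dist_eq, Real.dist_eq, ← sub_mul,
      abs_mul]
    calc |h (t + x) - h (t + y)| * |w t| ≤ K * |x - y| * |w t| :=
          mul_le_mul_of_nonneg_right hxy (abs_nonneg _)
      _ = K * |w t| * |x - y| := by ring
  · simpa using (ht.comp θ₀ ((hasDerivAt_id θ₀).const_add t)).mul_const (w t)

theorem hasDerivAt_intervalIntegral_comp_add_mul {h h' w : ℝ → ℝ} {K : ℝ≥0} {a b θ₀ : ℝ}
    (hh : LipschitzWith K h) (hh' : ∀ᵐ x, HasDerivAt h (h' x) x)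
    (hw : IntervalIntegrable w volume a b) :
    HasDerivAt (fun θ => ∫ t in a..b, h (t + θ) * w t) (∫ t in a..b, h' (t + θ₀) * w t) θ₀ := by
  simp only [intervalIntegral.intervalIntegral_eq_integral_uIoc]
  have hw' := hw.continuousOn_mul (hh.continuous.comp (continuous_add_const θ₀)).continuousOn
  rw [intervalIntegrable_iff] at hw hw'
  exact (hasDerivAt_integral_comp_add_mul_s6 Measure.restrict_le_self.absolutelyContinuous hh hh'
    hw hw').const_smul (if a ≤ b then (1 : ℝ) else -1)

theorem hasDerivAt_intervalIntegral_comp_sub_s6 {Ψ ψ v : ℝ → ℝ} {C a b y₀ : ℝ}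
    (hΨ : ∀ x, HasDerivAt Ψ (ψ x) x) (hψ : Continuous ψ) (hψC : ∀ x, |ψ x| ≤ C)
    (hv : Continuous v) :
    HasDerivAt (fun y => ∫ x in a..b, Ψ (y - v x)) (∫ x in a..b, ψ (y₀ - v x)) y₀ := by
  have hΨc : Continuous Ψ := continuous_iff_continuousAt.2 fun x => (hΨ x).continuousAt
  refine (intervalIntegral.hasDerivAt_integral_of_dominated_loc_of_deriv_le
    (F := fun y x => Ψ (y - v x)) (F' := fun y x => ψ (y - v x)) (bound := fun _ => C) univ_mem
    (Eventually.of_forall fun y => (hΨc.comp (continuous_const.sub hv)).aestronglyMeasurable)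
    ((hΨc.comp (continuous_const.sub hv)).intervalIntegrable _ _)
    (hψ.comp (continuous_const.sub hv)).aestronglyMeasurable
    (Eventually.of_forall fun x _ y _ => hψC _) intervalIntegrable_const
    (Eventually.of_forall fun x _ y _ => ?_)).2
  simpa [Function.comp_def] using (hΨ (y - v x)).comp y ((hasDerivAt_id y).sub_const (v x))

section StrictLocalMax

variable {f : ℝ → ℝ} {x₀ : ℝ}

theorem eventually_nhdsLT_lt_of_deriv_pos (hc : ContinuousAt f x₀)
    (hf : ∀ᶠ x in 𝓝[<] x₀, 0 < deriv f x) : ∀ᶠ x in 𝓝[<] x₀, f x < f x₀ := by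
  obtain ⟨a, ha, hpos⟩ := mem_nhdsLT_iff_exists_Ioo_subset.1 hf
  have hcont : ContinuousOn f (Ioc a x₀) := fun x hx => by
    rcases hx.2.eq_or_lt with rfl | hlt
    · exact hc.continuousWithinAt
    · exact (differentiableAt_of_deriv_ne_zero (hpos ⟨hx.1, hlt⟩).ne').continuousAt
        |>.continuousWithinAt
  have hmono : StrictMonoOn f (Ioc a x₀) :=
    strictMonoOn_of_deriv_pos (convex_Ioc a x₀) hcont fun x hx => hpos (by simpa using hx)
  filter_upwards [Ioo_mem_nhdsLT ha] with x hx
  exact hmono ⟨hx.1, hx.2.le⟩ ⟨ha, le_rfl⟩ hx.2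

theorem eventually_nhdsGT_lt_of_deriv_neg (hc : ContinuousAt f x₀)
    (hf : ∀ᶠ x in 𝓝[>] x₀, deriv f x < 0) : ∀ᶠ x in 𝓝[>] x₀, f x < f x₀ := by
  obtain ⟨b, hb, hneg⟩ := mem_nhdsGT_iff_exists_Ioo_subset.1 hf
  have hcont : ContinuousOn f (Ico x₀ b) := fun x hx => by
    rcases hx.1.eq_or_lt with rfl | hlt
    · exact hc.continuousWithinAt
    · exact (differentiableAt_of_deriv_ne_zero (hneg ⟨hlt, hx.2⟩).ne).continuousAt
        |>.continuousWithinAt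
  have hanti : StrictAntiOn f (Ico x₀ b) :=
    strictAntiOn_of_deriv_neg (convex_Ico x₀ b) hcont fun x hx => hneg (by simpa using hx)
  filter_upwards [Ioo_mem_nhdsGT hb] with x hx
  exact hanti ⟨le_rfl, hb⟩ ⟨hx.1.le, hx.2⟩ hx.1

theorem eventually_nhdsNE_lt_of_deriv_deriv_neg (hf : deriv (deriv f) x₀ < 0)
    (hd : deriv f x₀ = 0) (hc : ContinuousAt f x₀) : ∀ᶠ x in 𝓝[≠] x₀, f x < f x₀ := by
  have hsign : ∀ᶠ x in 𝓝[≠] x₀, SignType.sign (deriv f x) = SignType.sign (x₀ - x) :=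
    nhdsWithin_le_nhds (eventually_nhdsWithin_sign_eq_of_deriv_neg hf hd)
  rw [← nhdsLT_sup_nhdsGT, eventually_sup]
  exact ⟨eventually_nhdsLT_lt_of_deriv_pos hc (deriv_pos_left_of_sign_deriv hsign),
    eventually_nhdsGT_lt_of_deriv_neg hc (deriv_neg_right_of_sign_deriv hsign)⟩

end StrictLocalMax

section Lipschitz

variable {f : ℝ → ℝ} {L : ℝ≥0}

theorem LipschitzWith.ae_hasDerivAt_deriv (hf : LipschitzWith L f) :
    ∀ᵐ x, HasDerivAt f (deriv f x) x :=
  hf.ae_differentiableAt.mono fun _ hx => hx.hasDerivAt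

theorem LipschitzWith.intervalIntegrable_deriv (hf : LipschitzWith L f) (a b : ℝ) :
    IntervalIntegrable (deriv f) volume a b :=
  (hf.lipschitzOnWith (s := uIcc a b)).absolutelyContinuousOnInterval.intervalIntegrable_deriv

theorem LipschitzWith.integral_comp_mul_deriv {g : ℝ → ℝ} {B : ℝ≥0} (hf : LipschitzWith L f)
    (hg : Continuous g) (hgB : ∀ y, |g y| ≤ B) (a b : ℝ) :
    ∫ x in a..b, g (f x) * deriv f x = ∫ y in f a..f b, g y := by
  set A : ℝ → ℝ := fun y => ∫ z in (0 : ℝ)..y, g z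
  have hA : ∀ y, HasDerivAt A (g y) y := fun y => (hg.integral_hasStrictDerivAt 0 y).hasDerivAt
  have hAf : LipschitzWith (B * L) (A ∘ f) :=
    (lipschitzWith_of_hasDerivAt_of_abs_le hA hgB).comp hf
  calc ∫ x in a..b, g (f x) * deriv f x = ∫ x in a..b, deriv (A ∘ f) x :=
        intervalIntegral.integral_congr_ae (hf.ae_hasDerivAt_deriv.mono fun x hx _ =>
          ((hA (f x)).comp x hx).deriv.symm)
    _ = A (f b) - A (f a) :=
        hAf.lipschitzOnWith.absolutelyContinuousOnInterval.integral_deriv_eq_sub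
    _ = ∫ y in f a..f b, g y := intervalIntegral.integral_interval_sub_left
        (hg.intervalIntegrable _ _) (hg.intervalIntegrable _ _)

theorem LipschitzWith.hasDerivAt_intervalIntegral_mul_comp_sub (hf : LipschitzWith L f)
    (hper : Function.Periodic f 1) {u : ℝ → ℝ} (hu : Continuous u) (hup : Function.Periodic u 1)
    (θ : ℝ) :
    HasDerivAt (fun θ => ∫ t in (0 : ℝ)..1, u t * f (t - θ))
      (-∫ t in (0 : ℝ)..1, u (t + θ) * deriv f t) θ := by
  have hN := (hasDerivAt_intervalIntegral_comp_add_mul (θ₀ := -θ) hf hf.ae_hasDerivAt_deriv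
    (hu.intervalIntegrable 0 1)).scomp θ (hasDerivAt_neg θ)
  have hshift : ∫ t in (0 : ℝ)..1, deriv f (t + -θ) * u t
      = ∫ t in (0 : ℝ)..1, u (t + θ) * deriv f t := by
    simpa [mul_comm] using
      (hper.deriv.mul (hup.add_const θ)).intervalIntegral_comp_add_right 0 (-θ)
  have hfun : (fun θ => ∫ t in (0 : ℝ)..1, u t * f (t - θ))
      = (fun θ => ∫ t in (0 : ℝ)..1, f (t + θ) * u t) ∘ Neg.neg := by
    ext θ
    simp [sub_eq_add_neg, mul_comm]
  rw [hfun, ← hshift]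
  simpa using hN

theorem LipschitzWith.integral_mul_sq_pos {f' w : ℝ → ℝ} {C : ℝ≥0} (hf : LipschitzWith L f)
    (hf' : ∀ᵐ x, HasDerivAt f (f' x) x)
    (hnonconst : 0 < volume {t | t ∈ Icc (0 : ℝ) 1 ∧ f' t ≠ 0})
    (hw : Measurable w) (hwC : ∀ t, w t ∈ Ioc 0 (C : ℝ)) :
    0 < ∫ t in (0 : ℝ)..1, w t * f' t ^ 2 := by
  have hf'meas : AEStronglyMeasurable f' :=
    (measurable_deriv f).aestronglyMeasurable.congr (hf'.mono fun t ht => ht.deriv)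
  have hint : IntervalIntegrable (fun t => w t * f' t ^ 2) volume 0 1 :=
    (intervalIntegrable_const (c := (C : ℝ) * L ^ 2)).mono_fun'
      (hw.aestronglyMeasurable.mul (hf'meas.pow 2)).restrict
      (ae_restrict_of_ae (hf'.mono fun t ht => by
        dsimp only
        rw [norm_mul, norm_pow, Real.norm_eq_abs, abs_of_pos (hwC t).1]
        exact mul_le_mul (hwC t).2 (pow_le_pow_left₀ (norm_nonneg _) (ht.le_of_lipschitz hf) 2)
          (by positivity) C.coe_nonneg))
  refine intervalIntegral_pos_of_measure_Icc_support_pos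
    (Eventually.of_forall fun t => mul_nonneg (hwC t).1.le (sq_nonneg _)) hint ?_
  simpa [(hwC _).1.ne'] using hnonconst

end Lipschitz

section Density

variable {φ Φ : ℝ → ℝ} {C : ℝ≥0}

theorem hasDerivAt_of_eq_setIntegral_Iic (hφ : Continuous φ) (hφi : Integrable φ)
    (hΦ : ∀ t, Φ t = ∫ z in Iic t, φ z) (t : ℝ) : HasDerivAt Φ (φ t) t := by
  have hΦeq : Φ = fun t => Φ 0 + ∫ z in (0 : ℝ)..t, φ z := funext fun t => by
    rw [← intervalIntegral.integral_Iic_sub_Iic hφi.integrableOn hφi.integrableOn, hΦ, hΦ]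
    ring
  rw [hΦeq]
  exact (hφ.integral_hasStrictDerivAt 0 t).hasDerivAt.const_add _

theorem mem_Icc_of_eq_setIntegral_Iic (hφpos : ∀ z, 0 < φ z) (hφi : Integrable φ)
    (hφ1 : ∫ z, φ z = 1) (hΦ : ∀ t, Φ t = ∫ z in Iic t, φ z) (t : ℝ) : Φ t ∈ Icc 0 1 := by
  rw [hΦ]
  exact ⟨setIntegral_nonneg measurableSet_Iic fun z _ => (hφpos z).le,
    hφ1 ▸ setIntegral_le_integral hφi (Eventually.of_forall fun z => (hφpos z).le)⟩

theorem integral_mul_mem_Icc {u : ℝ → ℝ} (hu : Continuous u) (hu01 : ∀ z, u z ∈ Icc 0 1)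
    (hφpos : ∀ z, 0 < φ z) (hφi : Integrable φ) (hφ1 : ∫ z, φ z = 1) :
    ∫ z, u z * φ z ∈ Icc 0 1 := by
  have hint : Integrable (fun z => u z * φ z) :=
    hφi.bdd_mul hu.aestronglyMeasurable (Eventually.of_forall fun z => by
      rw [Real.norm_eq_abs, abs_of_nonneg (hu01 z).1]; exact (hu01 z).2)
  refine ⟨integral_nonneg fun z => mul_nonneg (hu01 z).1 (hφpos z).le, hφ1 ▸ ?_⟩
  exact integral_mono hint hφi fun z => mul_le_of_le_one_left (hφpos z).le (hu01 z).2

/-- The density of `X - Y` for independent `X`, `Y` with density `φ`. -/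
noncomputable def diffDensity (φ : ℝ → ℝ) (t : ℝ) : ℝ := ∫ z, φ (z + t) * φ z

theorem integrable_comp_add_mul_self (hφ : Continuous φ) (hφpos : ∀ z, 0 < φ z) (hφi : Integrable φ)
    (hφC : ∀ z, φ z ≤ C) (t : ℝ) : Integrable fun z => φ (z + t) * φ z :=
  hφi.bdd_mul (hφ.comp (continuous_add_const t)).aestronglyMeasurable
    (Eventually.of_forall fun z => by
      rw [Real.norm_eq_abs, abs_of_pos (hφpos _)]; exact hφC _)

theorem continuous_diffDensity (hφ : Continuous φ) (hφpos : ∀ z, 0 < φ z) (hφi : Integrable φ)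
    (hφC : ∀ z, φ z ≤ C) : Continuous (diffDensity φ) :=
  continuous_of_dominated
    (fun t => (integrable_comp_add_mul_self hφ hφpos hφi hφC t).aestronglyMeasurable)
    (fun t => Eventually.of_forall fun z => by
      rw [Real.norm_eq_abs, abs_of_pos (mul_pos (hφpos _) (hφpos _))]
      exact mul_le_mul_of_nonneg_right (hφC _) (hφpos z).le)
    (hφi.const_mul C)
    (Eventually.of_forall fun z => ((hφ.comp (continuous_const.add continuous_id)).mul
      continuous_const))

theorem diffDensity_pos (hφ : Continuous φ) (hφpos : ∀ z, 0 < φ z) (hφi : Integrable φ)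
    (hφC : ∀ z, φ z ≤ C) (t : ℝ) : 0 < diffDensity φ t := by
  rw [diffDensity, integral_pos_iff_support_of_nonneg
    (fun z => (mul_pos (hφpos _) (hφpos z)).le) (integrable_comp_add_mul_self hφ hφpos hφi hφC t)]
  simp [Function.support, (hφpos _).ne']

theorem diffDensity_le (hφ : Continuous φ) (hφpos : ∀ z, 0 < φ z) (hφi : Integrable φ)
    (hφ1 : ∫ z, φ z = 1) (hφC : ∀ z, φ z ≤ C) (t : ℝ) : diffDensity φ t ≤ C := by
  calc diffDensity φ t ≤ ∫ z, C * φ z :=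
        integral_mono (integrable_comp_add_mul_self hφ hφpos hφi hφC t) (hφi.const_mul C)
          fun z => mul_le_mul_of_nonneg_right (hφC _) (hφpos z).le
    _ = C := by rw [integral_const_mul, hφ1, mul_one]

theorem hasDerivAt_diffDensity (hΦ : ∀ t, HasDerivAt Φ (φ t) t) (hΦ01 : ∀ t, Φ t ∈ Icc 0 1)
    (hφpos : ∀ z, 0 < φ z) (hφi : Integrable φ) (hφC : ∀ z, φ z ≤ C) (t : ℝ) :
    HasDerivAt (fun t => ∫ z, Φ (t + z) * φ z) (diffDensity φ t) t := by
  have hΦlip : LipschitzWith C Φ := lipschitzWith_of_hasDerivAt_of_abs_le hΦ fun z => by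
    rw [abs_of_pos (hφpos z)]; exact hφC z
  have hint : Integrable fun z => Φ (z + t) * φ z :=
    hφi.bdd_mul (hΦlip.continuous.comp (continuous_add_const t)).aestronglyMeasurable
      (Eventually.of_forall fun z => by
        rw [Real.norm_eq_abs, abs_of_nonneg (hΦ01 _).1]; exact (hΦ01 _).2)
  rw [show (fun s => ∫ z, Φ (s + z) * φ z) = fun s => ∫ z, Φ (z + s) * φ z by
    simp only [add_comm]]
  exact hasDerivAt_integral_comp_add_mul_s6 Measure.AbsolutelyContinuous.rfl hΦlip
    (Eventually.of_forall hΦ) hφi hint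

theorem averaged_cdf_mem_Icc_and_deriv_mem_Ioc {Φ₂ v g g' : ℝ → ℝ} (hφ : Continuous φ)
    (hφpos : ∀ z, 0 < φ z) (hφi : Integrable φ) (hφ1 : ∫ z, φ z = 1) (hφC : ∀ z, φ z ≤ C)
    (hΦ : ∀ t, Φ t = ∫ z in Iic t, φ z) (hΦ₂ : ∀ t, Φ₂ t = ∫ z, Φ (t + z) * φ z)
    (hv : Continuous v) (hg : ∀ y, g y = ∫ x in (0 : ℝ)..1, Φ₂ (y - v x))
    (hg' : ∀ y, HasDerivAt g (g' y) y) (y : ℝ) :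
    g y ∈ Icc 0 1 ∧ g' y ∈ Ioc 0 (C : ℝ) := by
  have hΦd := hasDerivAt_of_eq_setIntegral_Iic hφ hφi hΦ
  have hΦ01 := mem_Icc_of_eq_setIntegral_Iic hφpos hφi hφ1 hΦ
  have hΦ₂d : ∀ t, HasDerivAt Φ₂ (diffDensity φ t) t := fun t =>
    funext hΦ₂ ▸ hasDerivAt_diffDensity hΦd hΦ01 hφpos hφi hφC t
  have hΦ₂01 : ∀ t, Φ₂ t ∈ Icc 0 1 := fun t => hΦ₂ t ▸ integral_mul_mem_Icc
    ((continuous_iff_continuousAt.2 fun x => (hΦd x).continuousAt).comp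
      (continuous_const_add t)) (fun z => hΦ01 _) hφpos hφi hφ1
  have hφ₂c := continuous_diffDensity hφ hφpos hφi hφC
  have hφ₂C : ∀ t, diffDensity φ t ∈ Icc 0 (C : ℝ) := fun t =>
    ⟨(diffDensity_pos hφ hφpos hφi hφC t).le, diffDensity_le hφ hφpos hφi hφ1 hφC t⟩
  have hφ₂int : IntervalIntegrable (fun x => diffDensity φ (y - v x)) volume 0 1 :=
    (hφ₂c.comp (continuous_const.sub hv)).intervalIntegrable 0 1
  have hg'eq : g' y = ∫ x in (0 : ℝ)..1, diffDensity φ (y - v x) :=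
    (hg' y).unique (funext hg ▸ hasDerivAt_intervalIntegral_comp_sub_s6 hΦ₂d hφ₂c
      (fun t => abs_le.2 ⟨by linarith [(hφ₂C t).1, C.coe_nonneg], (hφ₂C t).2⟩) hv)
  have hΦ₂int : IntervalIntegrable (fun x => Φ₂ (y - v x)) volume 0 1 :=
    ((continuous_iff_continuousAt.2 fun t => (hΦ₂d t).continuousAt).comp
      (continuous_const.sub hv)).intervalIntegrable 0 1
  refine ⟨hg y ▸ intervalIntegral_mem_Icc_of_forall_mem_Icc hΦ₂int fun x => hΦ₂01 _, ?_,
    hg'eq ▸ (intervalIntegral_mem_Icc_of_forall_mem_Icc hφ₂int fun x => hφ₂C _).2⟩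
  exact hg'eq ▸ intervalIntegral.intervalIntegral_pos_of_pos hφ₂int
    (fun x => diffDensity_pos hφ hφpos hφi hφC _) zero_lt_one

end Density

section Correlation

variable {f g g' M : ℝ → ℝ} {L C : ℝ≥0}

theorem hasDerivAt_correlation (hf : LipschitzWith L f) (hper : Function.Periodic f 1)
    (hg : Continuous g) (hM : ∀ θ, M θ = ∫ t in (0 : ℝ)..1, g (f t) * f (t - θ)) (θ : ℝ) :
    HasDerivAt M (-∫ t in (0 : ℝ)..1, g (f (t + θ)) * deriv f t) θ :=
  funext hM ▸ hf.hasDerivAt_intervalIntegral_mul_comp_sub hper (hg.comp hf.continuous)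
    (hper.comp g) θ

theorem deriv_correlation_zero {B : ℝ≥0} (hf : LipschitzWith L f) (hper : Function.Periodic f 1)
    (hg : Continuous g) (hgB : ∀ y, |g y| ≤ B)
    (hM : ∀ θ, M θ = ∫ t in (0 : ℝ)..1, g (f t) * f (t - θ)) : deriv M 0 = 0 := by
  rw [(hasDerivAt_correlation hf hper hg hM 0).deriv]
  simp only [add_zero, hf.integral_comp_mul_deriv hg hgB, show f 1 = f 0 by simpa using hper 0,
    intervalIntegral.integral_same, neg_zero]

theorem hasDerivAt_deriv_correlation_zero {f' : ℝ → ℝ} (hf : LipschitzWith L f)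
    (hper : Function.Periodic f 1) (hf' : ∀ᵐ x, HasDerivAt f (f' x) x)
    (hg' : ∀ y, HasDerivAt g (g' y) y) (hg'C : ∀ y, |g' y| ≤ C)
    (hM : ∀ θ, M θ = ∫ t in (0 : ℝ)..1, g (f t) * f (t - θ)) :
    HasDerivAt (deriv M) (-∫ t in (0 : ℝ)..1, g' (f t) * f' t ^ 2) 0 := by
  have hg : Continuous g := continuous_iff_continuousAt.2 fun y => (hg' y).continuousAt
  have hderiv : deriv M = fun θ => -∫ t in (0 : ℝ)..1, g (f (t + θ)) * deriv f t :=
    funext fun θ => (hasDerivAt_correlation hf hper hg hM θ).deriv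
  have hgf : ∀ᵐ x, HasDerivAt (g ∘ f) (g' (f x) * deriv f x) x :=
    hf.ae_hasDerivAt_deriv.mono fun x hx => (hg' (f x)).comp x hx
  have hm := (hasDerivAt_intervalIntegral_comp_add_mul (θ₀ := 0)
    ((lipschitzWith_of_hasDerivAt_of_abs_le hg' hg'C).comp hf) hgf
    (hf.intervalIntegrable_deriv 0 1)).neg
  have hI : ∫ t in (0 : ℝ)..1, g' (f t) * f' t ^ 2
      = ∫ t in (0 : ℝ)..1, g' (f (t + 0)) * deriv f (t + 0) * deriv f t :=
    intervalIntegral.integral_congr_ae (hf'.mono fun t ht _ => by rw [add_zero, ht.deriv]; ring)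
  rw [hderiv, hI]
  exact hm

end Correlation

theorem M_second_deriv_neg_strict_local_max
    (f f' φ Φ Φ₂ g g' M : ℝ → ℝ) (L : NNReal)
    (hf : LipschitzWith L f)
    (hper : ∀ x, f (x + 1) = f x)
    (hf' : ∀ᵐ x, HasDerivAt f (f' x) x)
    (hnonconst : 0 < volume {t : ℝ | t ∈ Set.Icc (0:ℝ) 1 ∧ f' t ≠ 0})
    (hφcont : Continuous φ)
    (hφpos : ∀ z, 0 < φ z)
    (hφint : Integrable φ)
    (hφone : ∫ z, φ z = 1)
    (hφbdd : BddAbove (Set.range φ))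
    (hΦ : ∀ t, Φ t = ∫ z in Set.Iic t, φ z)
    (hΦ₂ : ∀ t, Φ₂ t = ∫ z, Φ (t + z) * φ z)
    (hg : ∀ y, g y = ∫ x in (0:ℝ)..1, Φ₂ (y - f x))
    (hg' : ∀ y, HasDerivAt g (g' y) y)
    (hM : ∀ θ, M θ = ∫ t in (0:ℝ)..1, g (f t) * f (t - θ)) :
    HasDerivAt (deriv M) (-(∫ t in (0:ℝ)..1, g' (f t) * (f' t) ^ 2)) 0 ∧
    (-(∫ t in (0:ℝ)..1, g' (f t) * (f' t) ^ 2)) < 0 ∧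
    ∃ ε > 0, ∀ θ ∈ Set.Ioo (-ε) ε, θ ≠ 0 → M θ < M 0 := by
  obtain ⟨C, hC⟩ := hφbdd
  have hgmem := averaged_cdf_mem_Icc_and_deriv_mem_Ioc (C := C.toNNReal) hφcont hφpos hφint hφone
    (fun z => (hC ⟨z, rfl⟩).trans (Real.le_coe_toNNReal C)) hΦ hΦ₂ hf.continuous hg hg'
  have hgc : Continuous g := continuous_iff_continuousAt.2 fun y => (hg' y).continuousAt
  have hM'' := hasDerivAt_deriv_correlation_zero hf hper hf' hg'
    (fun y => (abs_of_pos (hgmem y).2.1).trans_le (hgmem y).2.2) hM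
  have hg'f : Measurable fun t => g' (f t) :=
    (funext fun y => (hg' y).deriv) ▸ (measurable_deriv g).comp hf.continuous.measurable
  have hneg := neg_neg_of_pos (hf.integral_mul_sq_pos hf' hnonconst hg'f fun t => (hgmem (f t)).2)
  refine ⟨hM'', hneg, ?_⟩
  have hmax := eventually_nhdsNE_lt_of_deriv_deriv_neg (hM''.deriv ▸ hneg)
    (deriv_correlation_zero (B := 1) hf hper hgc
      (fun y => abs_le.2 ⟨by linarith [(hgmem y).1.1], by simpa using (hgmem y).1.2⟩) hM)
    (hasDerivAt_correlation hf hper hgc hM 0).continuousAt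
  obtain ⟨ε, hε, hball⟩ := Metric.eventually_nhds_iff_ball.1 (eventually_nhdsWithin_iff.1 hmax)
  exact ⟨ε, hε, fun θ hθ hθ0 => hball θ (by simpa [Real.ball_eq_Ioo] using hθ) hθ0⟩
end

section
/- (Uniform Glivenko–Cantelli for independent non-identical arrays) Let {Y_{i,n} : 1 ≤ i ≤ n, n ≥ 1} be a triangular array of row-wise independent real random variables with CDFs F_{i,n}, such that the family {F_{i,n}} is uniformly tight (for every ε>0 there is K with F_{i,n}(K) ≥ 1−ε and F_{i,n}(−K) ≤ ε for all i,n) and uniformly equicontinuous (sup_{i,n} sup_t (F_{i,n}(t+δ) − F_{i,n}(t)) → 0 as δ → 0). Let F̂_{[n]}(y) = (1/n)Σ_i 1{Y_{i,n} ≤ y} and F_{[n]} = (1/n)Σ_i F_{i,n}. Then sup_t |F̂_{[n]}(t) − F_{[n]}(t)| → 0 in probability as n → ∞. -/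
/-!
Chebyshev's inequality controls the empirical CDF at any single point with probability
`1 - O(1/n)`. Uniform tightness and equicontinuity give a grid `-K, -K + δ, …, -K + mδ ⊇ [-K, K]`
whose size does not depend on `n`, on which the average CDF increases by at most `ε/2` per step
and is within `ε/2` of `0` and `1` at the ends. Since both the empirical and the average CDF are
monotone, a deviation `ε` at some `t` forces a deviation `ε/2` at a neighbouring grid point, so a
union bound over the `m + 1` grid points gives a bound `O(m/n)`.
-/

open MeasureTheory Set Filter ProbabilityTheory
open scoped BigOperators

/-- Bracketing step: `g₁ ≤ g ≤ g₂` and `h₁ ≤ h ≤ h₂` are the values at `s ≤ t ≤ u` of two monotone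
functions. -/
lemma abs_sub_le_max_abs_sub_add {g₁ g g₂ h₁ h h₂ : ℝ} (hg₁ : g₁ ≤ g) (hg₂ : g ≤ g₂)
    (hh₁ : h₁ ≤ h) (hh₂ : h ≤ h₂) :
    |g - h| ≤ max |g₁ - h₁| |g₂ - h₂| + (h₂ - h₁) := by
  have h₁' := (neg_le_abs (g₁ - h₁)).trans (le_max_left _ |g₂ - h₂|)
  have h₂' := (le_abs_self (g₂ - h₂)).trans (le_max_right |g₁ - h₁| _)
  rw [abs_le]
  constructor <;> linarith

lemma exists_nat_lt_mem_Icc_add_mul {a δ t : ℝ} {m : ℕ} (hδ : 0 < δ) (hat : a < t)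
    (htm : t < a + m * δ) :
    ∃ j < m, t ∈ Icc (a + j * δ) (a + (j + 1 : ℕ) * δ) := by
  set j := ⌊(t - a) / δ⌋₊
  have hj : (j : ℝ) * δ ≤ t - a := (le_div_iff₀ hδ).1 (Nat.floor_le (by positivity))
  have hj' : t - a < (j + 1 : ℕ) * δ := by
    push_cast
    exact (div_lt_iff₀ hδ).1 (Nat.lt_floor_add_one _)
  refine ⟨j, ?_, by linarith, by linarith⟩
  exact_mod_cast (mul_lt_mul_iff_of_pos_right hδ).1 (by linarith : (j : ℝ) * δ < m * δ)

lemma exists_abs_sub_le_abs_sub_grid_add {G H : ℝ → ℝ} (hG : Monotone G) (hH : Monotone H)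
    (hG₀₁ : ∀ t, G t ∈ Icc 0 1) (hH₀₁ : ∀ t, H t ∈ Icc 0 1) {a δ η : ℝ} {m : ℕ} (hδ : 0 < δ)
    (hleft : H a ≤ η) (hright : 1 - η ≤ H (a + m * δ)) (hosc : ∀ s, H (s + δ) - H s ≤ η)
    (t : ℝ) : ∃ j ≤ m, |G t - H t| ≤ |G (a + j * δ) - H (a + j * δ)| + η := by
  -- Beyond the ends of the grid, bracket `t` by a grid point and by `∓∞`, where `G = H = 0`
  -- (resp. `G = H = 1`).
  rcases le_or_gt t a with hta | hat
  · refine ⟨0, Nat.zero_le m, ?_⟩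
    have := abs_sub_le_max_abs_sub_add (hG₀₁ t).1 (hG hta) (hH₀₁ t).1 (hH hta)
    rw [sub_zero, abs_zero, max_eq_right (abs_nonneg _)] at this
    simpa using this.trans (by linarith)
  rcases le_or_gt (a + m * δ) t with hmt | htm
  · refine ⟨m, le_rfl, ?_⟩
    have := abs_sub_le_max_abs_sub_add (hG hmt) (hG₀₁ t).2 (hH hmt) (hH₀₁ t).2
    rw [sub_self, abs_zero, max_eq_left (abs_nonneg _)] at this
    linarith
  obtain ⟨j, hjm, hjt, htj⟩ := exists_nat_lt_mem_Icc_add_mul hδ hat htm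
  have hstep : H (a + (j + 1 : ℕ) * δ) - H (a + j * δ) ≤ η := by
    simpa [add_mul, add_assoc] using hosc (a + j * δ)
  have := abs_sub_le_max_abs_sub_add (hG hjt) (hG htj) (hH hjt) (hH htj)
  rcases max_choice |G (a + j * δ) - H (a + j * δ)|
      |G (a + (j + 1 : ℕ) * δ) - H (a + (j + 1 : ℕ) * δ)| with hmax | hmax
  · exact ⟨j, hjm.le, by linarith⟩
  · exact ⟨j + 1, hjm, by linarith⟩

section Chebyshev

variable {Ω ι : Type*} [MeasurableSpace Ω] {μ : Measure Ω} [IsProbabilityMeasure μ] [Fintype ι]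
  {X : ι → Ω → ℝ} {a b : ℝ}

lemma variance_sum_le_card_mul_of_mem_Icc (hX : ∀ i, AEMeasurable (X i) μ)
    (hind : iIndepFun X μ) (hab : ∀ i, ∀ᵐ ω ∂μ, X i ω ∈ Icc a b) :
    variance (∑ i, X i) μ ≤ Fintype.card ι * ((b - a) / 2) ^ 2 := by
  rw [IndepFun.variance_sum (fun i _ ↦ memLp_of_bounded (hab i) (hX i).aestronglyMeasurable 2)
    fun i _ j _ hij ↦ hind.indepFun hij]
  calc ∑ i, variance (X i) μ ≤ ∑ _i : ι, ((b - a) / 2) ^ 2 :=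
        Finset.sum_le_sum fun i _ ↦ variance_le_sq_of_bounded (hab i) (hX i)
    _ = Fintype.card ι * ((b - a) / 2) ^ 2 := by simp

lemma meas_le_abs_expect_sub_expect_integral_le [Nonempty ι] (hX : ∀ i, AEMeasurable (X i) μ)
    (hind : iIndepFun X μ) (hab : ∀ i, ∀ᵐ ω ∂μ, X i ω ∈ Icc a b) {c : ℝ} (hc : 0 < c) :
    μ {ω | c ≤ |𝔼 i, X i ω - 𝔼 i, μ[X i]|} ≤
      ENNReal.ofReal (((b - a) / 2) ^ 2 / c ^ 2 / Fintype.card ι) := by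
  have hN : (0 : ℝ) < Fintype.card ι := by exact_mod_cast Fintype.card_pos
  have hL2 : ∀ i, MemLp (X i) 2 μ := fun i ↦ memLp_of_bounded (hab i) (hX i).aestronglyMeasurable 2
  have hmean : ∫ ω, ∑ i, X i ω ∂μ = ∑ i, μ[X i] :=
    integral_finsetSum _ fun i _ ↦ (hL2 i).integrable one_le_two
  have hset : {ω | c ≤ |𝔼 i, X i ω - 𝔼 i, μ[X i]|} =
      {ω | Fintype.card ι * c ≤ |(∑ i, X i) ω - μ[∑ i, X i]|} := by
    ext ω
    simp only [mem_ofPred_eq, Fintype.expect_eq_sum_div_card, ← sub_div, abs_div, Nat.abs_cast,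
      le_div_iff₀ hN, hmean, Finset.sum_apply, mul_comm c]
  rw [hset]
  refine (meas_ge_le_variance_div_sq (memLp_finsetSum' _ fun i _ ↦ hL2 i)
    (by positivity)).trans (ENNReal.ofReal_le_ofReal ?_)
  calc variance (∑ i, X i) μ / (Fintype.card ι * c) ^ 2
      ≤ Fintype.card ι * ((b - a) / 2) ^ 2 / (Fintype.card ι * c) ^ 2 := by
        gcongr
        exact variance_sum_le_card_mul_of_mem_Icc hX hind hab
    _ = ((b - a) / 2) ^ 2 / c ^ 2 / Fintype.card ι := by field_simp

end Chebyshev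

lemma integral_ite_le_eq_measureReal {Ω : Type*} [MeasurableSpace Ω] {μ : Measure Ω}
    {Z : Ω → ℝ} (hZ : Measurable Z) (t : ℝ) :
    ∫ ω, (if Z ω ≤ t then 1 else 0 : ℝ) ∂μ = μ.real {ω | Z ω ≤ t} := by
  rw [← integral_indicator_one (μ := μ) (s := {ω | Z ω ≤ t}) (hZ measurableSet_Iic)]
  rfl

lemma Fin.inv_mul_sum_eq_expect {n : ℕ} (f : Fin n → ℝ) :
    (n : ℝ)⁻¹ * ∑ i, f i = 𝔼 i, f i := by
  rw [Fintype.expect_eq_sum_div_card, Fintype.card_fin, inv_mul_eq_div]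

section EmpiricalCDF

variable {Ω : Type*} {n : ℕ}

noncomputable def empiricalCDF (Y : Fin n → Ω → ℝ) (ω : Ω) (t : ℝ) : ℝ :=
  𝔼 i, if Y i ω ≤ t then 1 else 0

lemma monotone_empiricalCDF (Y : Fin n → Ω → ℝ) (ω : Ω) : Monotone (empiricalCDF Y ω) :=
  fun _ _ hst ↦ Finset.expect_le_expect fun i _ ↦ by grind

lemma empiricalCDF_mem_Icc [NeZero n] (Y : Fin n → Ω → ℝ) (ω : Ω) (t : ℝ) :
    empiricalCDF Y ω t ∈ Icc 0 1 :=
  ⟨Finset.expect_nonneg fun i _ ↦ by grind,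
    Finset.expect_le Finset.univ_nonempty fun i _ ↦ by grind⟩

variable [MeasurableSpace Ω]

noncomputable def averageCDF (μ : Measure Ω) (Y : Fin n → Ω → ℝ) (t : ℝ) : ℝ :=
  𝔼 i, μ.real {ω | Y i ω ≤ t}

lemma monotone_averageCDF (μ : Measure Ω) [IsFiniteMeasure μ] (Y : Fin n → Ω → ℝ) :
    Monotone (averageCDF μ Y) := fun _ _ hst ↦
  Finset.expect_le_expect fun _ _ ↦ measureReal_mono fun _ hω ↦ le_trans hω hst

lemma averageCDF_mem_Icc [NeZero n] (μ : Measure Ω) [IsProbabilityMeasure μ]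
    (Y : Fin n → Ω → ℝ) (t : ℝ) : averageCDF μ Y t ∈ Icc 0 1 :=
  ⟨Finset.expect_nonneg fun _ _ ↦ measureReal_nonneg,
    Finset.expect_le Finset.univ_nonempty fun _ _ ↦ measureReal_le_one⟩

variable {μ : Measure Ω} [IsProbabilityMeasure μ] [NeZero n] {Y : Fin n → Ω → ℝ}

lemma meas_le_abs_empiricalCDF_sub_averageCDF_le (hY : ∀ i, Measurable (Y i))
    (hind : iIndepFun Y μ) (t : ℝ) {c : ℝ} (hc : 0 < c) :
    μ {ω | c ≤ |empiricalCDF Y ω t - averageCDF μ Y t|} ≤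
      ENNReal.ofReal (1 / (4 * c ^ 2) / n) := by
  have hstep : Measurable fun x : ℝ ↦ (if x ≤ t then 1 else 0 : ℝ) :=
    Measurable.ite measurableSet_Iic measurable_const measurable_const
  have h := meas_le_abs_expect_sub_expect_integral_le (X := fun i ω ↦ if Y i ω ≤ t then 1 else 0)
    (a := 0) (b := 1) (fun i ↦ (hstep.comp (hY i)).aemeasurable)
    (hind.comp (fun _ ↦ _) fun _ ↦ hstep) (fun i ↦ ae_of_all _ fun ω ↦ by split_ifs <;> simp) hc
  simp only [integral_ite_le_eq_measureReal (hY _), Fintype.card_fin] at h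
  refine h.trans (ENNReal.ofReal_le_ofReal (le_of_eq ?_))
  ring

lemma meas_exists_le_abs_empiricalCDF_sub_averageCDF_le (hY : ∀ i, Measurable (Y i))
    (hind : iIndepFun Y μ) {ε δ K : ℝ} (hε : 0 < ε) (hδ : 0 < δ)
    (htight : ∀ i, 1 - ε / 2 ≤ μ.real {ω | Y i ω ≤ K} ∧ μ.real {ω | Y i ω ≤ -K} ≤ ε / 2)
    (hequi : ∀ i t, μ.real {ω | Y i ω ≤ t + δ} - μ.real {ω | Y i ω ≤ t} ≤ ε / 2) :
    μ {ω | ∃ t, ε ≤ |empiricalCDF Y ω t - averageCDF μ Y t|} ≤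
      (⌈2 * K / δ⌉₊ + 1) * ENNReal.ofReal (1 / (4 * (ε / 2) ^ 2) / n) := by
  set m := ⌈2 * K / δ⌉₊
  have hKm : K ≤ -K + m * δ := by
    have := (div_le_iff₀ hδ).1 (Nat.le_ceil (2 * K / δ))
    linarith
  have hleft : averageCDF μ Y (-K) ≤ ε / 2 :=
    Finset.expect_le Finset.univ_nonempty fun i _ ↦ (htight i).2
  have hright : 1 - ε / 2 ≤ averageCDF μ Y (-K + m * δ) :=
    (Finset.le_expect Finset.univ_nonempty fun i _ ↦ (htight i).1).trans
      (monotone_averageCDF μ Y hKm)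
  have hosc : ∀ s, averageCDF μ Y (s + δ) - averageCDF μ Y s ≤ ε / 2 := fun s ↦ by
    rw [averageCDF, averageCDF, ← Finset.expect_sub_distrib]
    exact Finset.expect_le Finset.univ_nonempty fun i _ ↦ hequi i s
  have hsub : {ω | ∃ t, ε ≤ |empiricalCDF Y ω t - averageCDF μ Y t|} ⊆
      ⋃ j ∈ Finset.range (m + 1),
        {ω | ε / 2 ≤ |empiricalCDF Y ω (-K + j * δ) - averageCDF μ Y (-K + j * δ)|} := by
    rintro ω ⟨t, ht⟩
    obtain ⟨j, hjm, hj⟩ := exists_abs_sub_le_abs_sub_grid_add (monotone_empiricalCDF Y ω)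
      (monotone_averageCDF μ Y) (empiricalCDF_mem_Icc Y ω) (averageCDF_mem_Icc μ Y) hδ hleft
      hright hosc t
    exact mem_biUnion (Finset.mem_range.2 (Nat.lt_succ_of_le hjm)) (show ε / 2 ≤ _ by linarith)
  calc _ ≤ _ := measure_mono hsub
    _ ≤ _ := measure_biUnion_finset_le _ _
    _ ≤ ∑ j ∈ Finset.range (m + 1), ENNReal.ofReal (1 / (4 * (ε / 2) ^ 2) / n) :=
        Finset.sum_le_sum fun j _ ↦
          meas_le_abs_empiricalCDF_sub_averageCDF_le hY hind _ (half_pos hε)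
    _ = _ := by simp

end EmpiricalCDF

theorem glivenko_cantelli_triangular_array
    {Ω : Type*} [MeasurableSpace Ω] (μ : Measure Ω) [IsProbabilityMeasure μ]
    (Y : (n : ℕ) → Fin n → Ω → ℝ)
    (hmeas : ∀ n i, Measurable (Y n i))
    (hindep : ∀ n, ProbabilityTheory.iIndepFun (Y n) μ)
    (F : (n : ℕ) → Fin n → ℝ → ℝ)
    (hF : ∀ n i t, F n i t = (μ {ω | Y n i ω ≤ t}).toReal)
    (htight : ∀ ε > 0, ∃ K : ℝ, ∀ n, ∀ i : Fin n,
      1 - ε ≤ F n i K ∧ F n i (-K) ≤ ε)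
    (hequi : ∀ ε > 0, ∃ δ > 0, ∀ n, ∀ i : Fin n, ∀ t,
      F n i (t + δ) - F n i t ≤ ε) :
    ∀ ε > 0,
      Tendsto (fun n : ℕ => μ {ω | ∃ t : ℝ,
          ε ≤ |(n : ℝ)⁻¹ * ∑ i : Fin n, (if Y n i ω ≤ t then (1:ℝ) else 0)
                - (n : ℝ)⁻¹ * ∑ i : Fin n, F n i t|})
        atTop (nhds 0) := by
  intro ε hε
  obtain ⟨K, hK⟩ := htight (ε / 2) (half_pos hε)
  obtain ⟨δ, hδ, hosc⟩ := hequi (ε / 2) (half_pos hε)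
  simp only [hF, ← measureReal_def, Fin.inv_mul_sum_eq_expect] at hK hosc ⊢
  have hbound : ∀ n ≥ 1, μ {ω | ∃ t, ε ≤ |empiricalCDF (Y n) ω t - averageCDF μ (Y n) t|} ≤
      (⌈2 * K / δ⌉₊ + 1) * ENNReal.ofReal (1 / (4 * (ε / 2) ^ 2) / n) := fun n hn ↦ by
    have : NeZero n := ⟨by omega⟩
    exact meas_exists_le_abs_empiricalCDF_sub_averageCDF_le (hmeas n) (hindep n) hε hδ (hK n)
      (hosc n)
  have hlim : Tendsto (fun n : ℕ ↦ ENNReal.ofReal (1 / (4 * (ε / 2) ^ 2) / n)) atTop (nhds 0) := by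
    simpa using ENNReal.tendsto_ofReal (tendsto_const_div_atTop_nhds_zero_nat _)
  refine tendsto_of_tendsto_of_tendsto_of_le_of_le' tendsto_const_nhds ?_
    (Eventually.of_forall fun n ↦ zero_le) (eventually_atTop.2 ⟨1, hbound⟩)
  simpa using ENNReal.Tendsto.const_mul hlim (Or.inr (by simp))
end

section
/- Let {B_{i,n} : i ≤ n} be row-wise independent random variables with |B_{i,n}| ≤ K and E[B_{i,n}] = 0, and let {f_{i,n} : i ≤ n, n ≥ 1} be functions on [0,1] that are uniformly bounded and uniformly equicontinuous. Then sup_{t∈[0,1]} |(1/n) Σ_{i=1}^n B_{i,n} f_{i,n}(t)| → 0 in probability as n → ∞. -/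
/-!
Fix `t`. The row sum `∑ i, B i * f i t` has independent centered summands bounded by `K * C`,
so its variance is at most `n (K C)²` and Chebyshev bounds the probability that the row average
exceeds `ε / 2` by `O(1 / n)`. Equicontinuity lets a single finite `δ`-net of `[0, 1]` (chosen
independently of `n`) control the supremum over `t` up to `ε / 2`, and a union bound over the
net still gives `O(1 / n)`.
-/

open MeasureTheory ProbabilityTheory Set Filter

section Average

variable {ι : Type*} [Fintype ι] [Nonempty ι]

theorem abs_average_mul_sub_le {b x y : ι → ℝ} {K η : ℝ} (hb : ∀ i, |b i| ≤ K)
    (hxy : ∀ i, |x i - y i| ≤ η) :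
    |(Fintype.card ι : ℝ)⁻¹ * ∑ i, b i * x i -
        (Fintype.card ι : ℝ)⁻¹ * ∑ i, b i * y i| ≤ K * η := by
  rw [← mul_sub, ← Finset.sum_sub_distrib, abs_mul, abs_inv, Nat.abs_cast,
    inv_mul_le_iff₀ (by positivity)]
  calc |∑ i, (b i * x i - b i * y i)| ≤ ∑ i, |b i * x i - b i * y i| :=
        Finset.abs_sum_le_sum_abs _ _
    _ ≤ ∑ _i : ι, K * η := Finset.sum_le_sum fun i _ => by
        rw [← mul_sub, abs_mul]
        exact mul_le_mul (hb i) (hxy i) (abs_nonneg _) ((abs_nonneg _).trans (hb i))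
    _ = Fintype.card ι * (K * η) := by simp

end Average

section Chebyshev

variable {Ω ι : Type*} [MeasurableSpace Ω] {μ : Measure Ω} [IsProbabilityMeasure μ]
  [Fintype ι]

theorem measure_abs_sum_ge_le_of_iIndepFun {Y : ι → Ω → ℝ} {M c : ℝ}
    (hindep : iIndepFun Y μ) (hmeas : ∀ i, AEMeasurable (Y i) μ)
    (hbd : ∀ i, ∀ᵐ ω ∂μ, |Y i ω| ≤ M) (hmean : ∀ i, μ[Y i] = 0) (hc : 0 < c) :
    μ {ω | c ≤ |∑ i, Y i ω|} ≤ ENNReal.ofReal (Fintype.card ι * M ^ 2 / c ^ 2) := by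
  have hIcc : ∀ i, ∀ᵐ ω ∂μ, Y i ω ∈ Icc (-M) M := fun i =>
    (hbd i).mono fun ω hω => abs_le.1 hω
  have hL2 : ∀ i, MemLp (Y i) 2 μ := fun i =>
    memLp_of_bounded (hIcc i) (hmeas i).aestronglyMeasurable 2
  have hvar : variance (∑ i, Y i) μ ≤ Fintype.card ι * M ^ 2 := by
    rw [IndepFun.variance_sum (fun i _ => hL2 i) fun i _ j _ hij => hindep.indepFun hij]
    calc ∑ i, variance (Y i) μ ≤ ∑ _i : ι, M ^ 2 := Finset.sum_le_sum fun i _ =>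
          (variance_le_sq_of_bounded (hIcc i) (hmeas i)).trans_eq (by ring)
      _ = Fintype.card ι * M ^ 2 := by simp
  have hmean_sum : μ[∑ i, Y i] = 0 := by
    simp only [Finset.sum_apply]
    rw [integral_finsetSum _ fun i _ => (hL2 i).integrable one_le_two]
    simp [hmean]
  calc μ {ω | c ≤ |∑ i, Y i ω|} = μ {ω | c ≤ |(∑ i, Y i) ω - μ[∑ i, Y i]|} := by
        rw [hmean_sum]
        simp only [sub_zero, Finset.sum_apply]
    _ ≤ ENNReal.ofReal (variance (∑ i, Y i) μ / c ^ 2) :=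
        meas_ge_le_variance_div_sq (memLp_finsetSum' _ fun i _ => hL2 i) hc
    _ ≤ ENNReal.ofReal (Fintype.card ι * M ^ 2 / c ^ 2) := by gcongr

variable [Nonempty ι]

theorem measure_abs_average_mul_ge_le {B : ι → Ω → ℝ} {a : ι → ℝ} {K C c : ℝ}
    (hK : 0 ≤ K) (hindep : iIndepFun B μ) (hmeas : ∀ i, AEMeasurable (B i) μ)
    (hbd : ∀ i, ∀ᵐ ω ∂μ, |B i ω| ≤ K) (hmean : ∀ i, μ[B i] = 0)
    (ha : ∀ i, |a i| ≤ C) (hc : 0 < c) :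
    μ {ω | c ≤ |(Fintype.card ι : ℝ)⁻¹ * ∑ i, B i ω * a i|}
      ≤ ENNReal.ofReal ((K * C) ^ 2 / c ^ 2 / Fintype.card ι) := by
  have hcard : (0 : ℝ) < Fintype.card ι := by exact_mod_cast Fintype.card_pos
  have hsum := measure_abs_sum_ge_le_of_iIndepFun (μ := μ) (Y := fun i ω => B i ω * a i)
    (M := K * C) (c := Fintype.card ι * c)
    (hindep.comp (fun i x => x * a i) fun i => measurable_mul_const _)
    (fun i => (hmeas i).mul_const _)
    (fun i => (hbd i).mono fun ω hω => by
      rw [abs_mul]; exact mul_le_mul hω (ha i) (abs_nonneg _) hK)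
    (fun i => by simp [integral_mul_const, hmean i]) (by positivity)
  convert hsum using 2
  · ext ω
    rw [mem_ofPred_eq, mem_ofPred_eq, abs_mul, abs_inv, Nat.abs_cast, inv_mul_eq_div,
      le_div_iff₀ hcard, mul_comm]
  · field_simp

theorem measure_exists_abs_average_mul_ge_le {X : Type*} {B : ι → Ω → ℝ}
    {f : ι → X → ℝ} {T : Set X} {s : Finset X} {K C η c : ℝ} (hK : 0 ≤ K)
    (hindep : iIndepFun B μ) (hmeas : ∀ i, AEMeasurable (B i) μ)
    (hbd : ∀ i, ∀ᵐ ω ∂μ, |B i ω| ≤ K) (hmean : ∀ i, μ[B i] = 0)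
    (hfs : ∀ u ∈ s, ∀ i, |f i u| ≤ C)
    (hnet : ∀ t ∈ T, ∃ u ∈ s, ∀ i, |f i t - f i u| ≤ η) (hc : 0 < c) :
    μ {ω | ∃ t ∈ T, c + K * η ≤ |(Fintype.card ι : ℝ)⁻¹ * ∑ i, B i ω * f i t|}
      ≤ ENNReal.ofReal (s.card * (K * C) ^ 2 / c ^ 2 / Fintype.card ι) := by
  have hsub :
      {ω | ∃ t ∈ T, c + K * η ≤ |(Fintype.card ι : ℝ)⁻¹ * ∑ i, B i ω * f i t|} ≤ᵐ[μ]
        ⋃ u ∈ s, {ω | c ≤ |(Fintype.card ι : ℝ)⁻¹ * ∑ i, B i ω * f i u|} := by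
    filter_upwards [ae_all_iff.2 hbd] with ω hω ⟨t, ht, hle⟩
    obtain ⟨u, hu, hclose⟩ := hnet t ht
    have hdiff := (abs_sub_abs_le_abs_sub _ _).trans (abs_average_mul_sub_le hω hclose)
    refine mem_iUnion₂.2 ⟨u, hu, ?_⟩
    show c ≤ _
    linarith
  calc _ ≤ _ := measure_mono_ae hsub
    _ ≤ _ := measure_biUnion_finset_le _ _
    _ ≤ ∑ _u ∈ s, ENNReal.ofReal ((K * C) ^ 2 / c ^ 2 / Fintype.card ι) :=
        Finset.sum_le_sum fun u hu =>
          measure_abs_average_mul_ge_le hK hindep hmeas hbd hmean (hfs u hu) hc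
    _ = ENNReal.ofReal (s.card * (K * C) ^ 2 / c ^ 2 / Fintype.card ι) := by
        rw [Finset.sum_const, nsmul_eq_mul, ← ENNReal.ofReal_natCast,
          ← ENNReal.ofReal_mul (by positivity)]
        ring_nf

end Chebyshev

theorem random_coefficients_uniform_lln
    {Ω : Type*} [MeasurableSpace Ω] (μ : Measure Ω) [IsProbabilityMeasure μ]
    (B : (n : ℕ) → Fin n → Ω → ℝ) (K : ℝ) (hK : 0 < K)
    (hmeas : ∀ n i, Measurable (B n i))
    (hindep : ∀ n, ProbabilityTheory.iIndepFun (B n) μ)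
    (hbd : ∀ n i, ∀ᵐ ω ∂μ, |B n i ω| ≤ K)
    (hcentered : ∀ n i, ∫ ω, B n i ω ∂μ = 0)
    (f : (n : ℕ) → Fin n → ℝ → ℝ) (C : ℝ)
    (hfbd : ∀ n, ∀ i : Fin n, ∀ t ∈ Set.Icc (0:ℝ) 1, |f n i t| ≤ C)
    (hfequi : ∀ ε > 0, ∃ δ > 0, ∀ n, ∀ i : Fin n,
      ∀ s ∈ Set.Icc (0:ℝ) 1, ∀ t ∈ Set.Icc (0:ℝ) 1,
        |t - s| ≤ δ → |f n i t - f n i s| ≤ ε) :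
    ∀ ε > 0,
      Tendsto (fun n : ℕ => μ {ω | ∃ t ∈ Set.Icc (0:ℝ) 1,
          ε ≤ |(n : ℝ)⁻¹ * ∑ i : Fin n, B n i ω * f n i t|})
        atTop (nhds 0) := by
  intro ε hε
  obtain ⟨δ, hδ, hδf⟩ := hfequi (ε / (2 * K)) (by positivity)
  obtain ⟨s, hsI, hcover⟩ := (isCompact_Icc (a := (0:ℝ)) (b := 1)).elim_nhds_subcover
    (fun u => Metric.ball u δ) fun u _ => Metric.ball_mem_nhds u hδ
  have hnet : ∀ t ∈ Icc (0:ℝ) 1, ∃ u ∈ s, ∀ n (i : Fin n),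
      |f n i t - f n i u| ≤ ε / (2 * K) := by
    intro t ht
    obtain ⟨u, hu, htu⟩ := mem_iUnion₂.1 (hcover ht)
    have htu' : |t - u| ≤ δ := (Real.dist_eq t u ▸ Metric.mem_ball.1 htu).le
    exact ⟨u, hu, fun n i => hδf n i u (hsI u hu) t ht htu'⟩
  have hsplit : ε = ε / 2 + K * (ε / (2 * K)) := by field_simp; ring
  have hbound : ∀ n : ℕ, n ≠ 0 → μ {ω | ∃ t ∈ Icc (0:ℝ) 1,
      ε ≤ |(n : ℝ)⁻¹ * ∑ i : Fin n, B n i ω * f n i t|}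
        ≤ ENNReal.ofReal (s.card * (K * C) ^ 2 / (ε / 2) ^ 2 / n) := by
    intro n hn
    have : NeZero n := ⟨hn⟩
    have h := measure_exists_abs_average_mul_ge_le (μ := μ) (T := Icc (0:ℝ) 1) (s := s)
      (f := f n) hK.le (hindep n) (fun i => (hmeas n i).aemeasurable) (hbd n) (hcentered n)
      (fun u hu i => hfbd n i u (hsI u hu))
      (fun t ht => (hnet t ht).imp fun u hu => ⟨hu.1, hu.2 n⟩) (half_pos hε)
    rwa [← hsplit, Fintype.card_fin] at h
  have hlim : Tendsto (fun n : ℕ => ENNReal.ofReal (s.card * (K * C) ^ 2 / (ε / 2) ^ 2 / n))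
      atTop (nhds 0) :=
    ENNReal.ofReal_zero ▸ ENNReal.tendsto_ofReal (tendsto_const_div_atTop_nhds_zero_nat _)
  exact tendsto_of_tendsto_of_tendsto_of_le_of_le' tendsto_const_nhds hlim
    (Eventually.of_forall fun _ => zero_le) ((eventually_ne_atTop 0).mono hbound)
end

section
/- (Expectation bound for the sup of a Lipschitz-parametrized centered sum) Let B_1,…,B_n be independent centered random variables with |B_i| ≤ K a.s., and let f_1,…,f_n : [−t_0,t_0] → ℝ be L-Lipschitz with f_i(0)=0. Then there is a universal constant C such that E[ sup_{|t|≤t_0} |(1/n)Σ_{i=1}^n B_i f_i(t)| ] ≤ C·K·L·t_0/√n. -/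
/-!
Write `X t = n⁻¹ ∑ B i * f i t`. Almost surely `X` is `K L`-Lipschitz, so on a grid of mesh `h`
the value `|X t - X 0|` is at most the variation of `X` along the grid plus `2 K L h`. Each grid
increment is a centred sum of independent bounded variables, whose `L¹` norm is at most its `L²`
norm `K L h / √n`; summing over the `2 t₀ / h` increments gives `2 K L t₀ / √n`, and letting
`h → 0` removes the error term.
-/

open MeasureTheory Set ProbabilityTheory

theorem abs_sub_le_sum_range_abs_sub (x : ℕ → ℝ) {j k N : ℕ} (hj : j ≤ N) (hk : k ≤ N) :
    |x j - x k| ≤ ∑ l ∈ Finset.range N, |x (l + 1) - x l| := by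
  wlog hjk : j ≤ k generalizing j k
  · rw [abs_sub_comm]; exact this hk hj (le_of_not_ge hjk)
  calc |x j - x k| ≤ ∑ l ∈ Finset.Ico j k, |x l - x (l + 1)| := by
        simpa only [Real.dist_eq] using dist_le_Ico_sum_dist x hjk
    _ = ∑ l ∈ Finset.Ico j k, |x (l + 1) - x l| :=
        Finset.sum_congr rfl fun _ _ => abs_sub_comm _ _
    _ ≤ ∑ l ∈ Finset.range N, |x (l + 1) - x l| :=
        Finset.sum_le_sum_of_subset_of_nonneg
          (fun l hl => Finset.mem_range.mpr ((Finset.mem_Ico.mp hl).2.trans_le hk))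
          (fun _ _ _ => abs_nonneg _)

theorem exists_nat_le_abs_sub_le {a h t : ℝ} (hh : 0 < h) {N : ℕ} (ht : t ∈ Icc a (a + N * h)) :
    ∃ j ≤ N, |t - (a + j * h)| ≤ h := by
  have hq : 0 ≤ (t - a) / h := div_nonneg (by linarith [ht.1]) hh.le
  refine ⟨⌊(t - a) / h⌋₊, Nat.floor_le_of_le ?_, abs_le.mpr ⟨?_, ?_⟩⟩
  · rw [div_le_iff₀ hh]; linarith [ht.2]
  · have := Nat.floor_le hq
    rw [le_div_iff₀ hh] at this
    linarith
  · have := Nat.lt_floor_add_one ((t - a) / h)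
    rw [div_lt_iff₀ hh] at this
    linarith

theorem add_nat_mul_mem_Icc {a h : ℝ} (hh : 0 ≤ h) {j N : ℕ} (hj : j ≤ N) :
    a + j * h ∈ Icc a (a + N * h) :=
  ⟨le_add_of_nonneg_right (by positivity),
    add_le_add_right (mul_le_mul_of_nonneg_right (Nat.cast_le.mpr hj) hh) a⟩

theorem abs_sub_le_sum_grid_add {g : ℝ → ℝ} {a b h M : ℝ} {N : ℕ} (hh : 0 < h) (hNh : a + N * h = b)
    (hM : 0 ≤ M) (hg : ∀ s ∈ Icc a b, ∀ t ∈ Icc a b, |g t - g s| ≤ M * |t - s|)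
    {t u : ℝ} (ht : t ∈ Icc a b) (hu : u ∈ Icc a b) :
    |g t - g u| ≤ ∑ l ∈ Finset.range N, |g (a + ↑(l + 1) * h) - g (a + l * h)| + 2 * M * h := by
  subst hNh
  obtain ⟨j, hjN, htj⟩ := exists_nat_le_abs_sub_le hh ht
  obtain ⟨k, hkN, huk⟩ := exists_nat_le_abs_sub_le hh hu
  have hgrid := abs_sub_le_sum_range_abs_sub (fun l => g (a + l * h)) hjN hkN
  have htj' := (hg _ (add_nat_mul_mem_Icc hh.le hjN) t ht).trans (mul_le_mul_of_nonneg_left htj hM)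
  have huk' := (hg _ (add_nat_mul_mem_Icc hh.le hkN) u hu).trans (mul_le_mul_of_nonneg_left huk hM)
  calc |g t - g u| ≤ |g t - g (a + j * h)| + |g (a + j * h) - g u| := abs_sub_le _ _ _
    _ ≤ |g t - g (a + j * h)| + (|g (a + j * h) - g (a + k * h)| + |g (a + k * h) - g u|) :=
        add_le_add_right (abs_sub_le _ _ _) _
    _ ≤ _ := by rw [abs_sub_comm _ (g u)]; linarith

section Probability

variable {Ω : Type*} [MeasurableSpace Ω] {μ : Measure Ω}

theorem integral_iSup_abs_sub_le [IsFiniteMeasure μ] {X : ℝ → Ω → ℝ} {a b M σ : ℝ} (hab : a < b)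
    (hM : 0 ≤ M) (hint : ∀ t, Integrable (X t) μ)
    (hlip : ∀ᵐ ω ∂μ, ∀ s ∈ Icc a b, ∀ t ∈ Icc a b, |X t ω - X s ω| ≤ M * |t - s|)
    (hinc : ∀ s ∈ Icc a b, ∀ t ∈ Icc a b, ∫ ω, |X t ω - X s ω| ∂μ ≤ σ * |t - s|)
    {u : ℝ} (hu : u ∈ Icc a b) :
    ∫ ω, ⨆ t : Icc a b, |X t ω - X u ω| ∂μ ≤ σ * (b - a) := by
  refine le_of_forall_pos_le_add fun ε hε => ?_
  set c := μ.real univ * (2 * M * (b - a))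
  obtain ⟨N, hN⟩ := exists_nat_gt (c / ε)
  have hNpos : (0 : ℝ) < N := lt_of_le_of_lt (by positivity) hN
  set h := (b - a) / N
  have hh : 0 < h := div_pos (sub_pos.mpr hab) hNpos
  have hNh : a + N * h = b := by simp only [h]; field_simp; ring
  have hΔ : ∀ l : ℕ, Integrable (fun ω => |X (a + ↑(l + 1) * h) ω - X (a + l * h) ω|) μ :=
    fun l => ((hint _).sub (hint _)).abs
  set G : Ω → ℝ := fun ω =>
    ∑ l ∈ Finset.range N, |X (a + ↑(l + 1) * h) ω - X (a + l * h) ω| + 2 * M * h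
  have hG : Integrable G μ := (integrable_finsetSum _ fun l _ => hΔ l).add (integrable_const _)
  have hsup : ∀ᵐ ω ∂μ, ⨆ t : Icc a b, |X t ω - X u ω| ≤ G ω := by
    filter_upwards [hlip] with ω hω
    exact Real.iSup_le (fun t => abs_sub_le_sum_grid_add hh hNh hM hω t.2 hu) (by positivity)
  have hgrid : ∀ l ∈ Finset.range N,
      ∫ ω, |X (a + ↑(l + 1) * h) ω - X (a + l * h) ω| ∂μ ≤ σ * h := by
    intro l hl
    have hl := Finset.mem_range.mp hl
    have mem := fun j (hj : j ≤ N) => hNh ▸ add_nat_mul_mem_Icc (a := a) hh.le hj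
    refine (hinc _ (mem l hl.le) _ (mem (l + 1) hl)).trans_eq ?_
    rw [show a + ↑(l + 1) * h - (a + l * h) = h by push_cast; ring, abs_of_pos hh]
  calc ∫ ω, ⨆ t : Icc a b, |X t ω - X u ω| ∂μ ≤ ∫ ω, G ω ∂μ :=
        integral_mono_of_nonneg (.of_forall fun ω => Real.iSup_nonneg fun _ => abs_nonneg _) hG hsup
    _ = ∑ l ∈ Finset.range N, ∫ ω, |X (a + ↑(l + 1) * h) ω - X (a + l * h) ω| ∂μ
          + μ.real univ * (2 * M * h) := by
        simp only [G]
        rw [integral_add (integrable_finsetSum _ fun l _ => hΔ l) (integrable_const _),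
          integral_finsetSum _ fun l _ => hΔ l, integral_const, smul_eq_mul]
    _ ≤ N * (σ * h) + c / N :=
        add_le_add (by simpa using Finset.sum_le_sum hgrid) (le_of_eq (by simp only [c, h]; ring))
    _ ≤ σ * (b - a) + ε := by
        refine add_le_add (le_of_eq (by simp only [h]; field_simp)) ?_
        rw [div_le_iff₀ hNpos]; rw [div_lt_iff₀ hε] at hN; linarith

theorem integral_abs_le_sqrt_integral_sq [IsProbabilityMeasure μ] {Y : Ω → ℝ} (hY : MemLp Y 2 μ) :
    ∫ ω, |Y ω| ∂μ ≤ √(∫ ω, Y ω ^ 2 ∂μ) := by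
  have hvar := variance_nonneg |Y| μ
  rw [variance_eq_sub hY.abs] at hvar
  refine Real.le_sqrt_of_sq_le ?_
  simpa only [Pi.pow_apply, Pi.abs_apply, sq_abs, sub_nonneg] using hvar

theorem integral_abs_sum_mul_le [IsProbabilityMeasure μ] {ι : Type*} [Fintype ι]
    {B : ι → Ω → ℝ} {K : ℝ} (hK : 0 ≤ K) (hmeas : ∀ i, AEMeasurable (B i) μ)
    (hindep : Pairwise fun i j => IndepFun (B i) (B j) μ)
    (hbdd : ∀ i, ∀ᵐ ω ∂μ, |B i ω| ≤ K) (hmean : ∀ i, ∫ ω, B i ω ∂μ = 0) (a : ι → ℝ) :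
    ∫ ω, |∑ i, B i ω * a i| ∂μ ≤ K * √(∑ i, a i ^ 2) := by
  have hB : ∀ i, MemLp (B i) 2 μ := fun i =>
    memLp_of_bounded ((hbdd i).mono fun _ h => abs_le.mp h) (hmeas i).aestronglyMeasurable 2
  set Y : ι → Ω → ℝ := fun i ω => B i ω * a i
  have hY : ∀ i, MemLp (Y i) 2 μ := fun i => (hB i).mul_const (a i)
  set S : Ω → ℝ := fun ω => ∑ i, B i ω * a i
  have hS : S = ∑ i, Y i := by ext ω; simp only [S, Y, Finset.sum_apply]
  have hS2 : MemLp S 2 μ := hS ▸ memLp_finsetSum' _ fun i _ => hY i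
  have hmeanS : μ[S] = 0 := by
    rw [integral_finsetSum _ fun i _ => (hY i).integrable one_le_two]
    simp only [Y, integral_mul_const, hmean, zero_mul, Finset.sum_const_zero]
  have hvar : Var[S; μ] ≤ K ^ 2 * ∑ i, a i ^ 2 := by
    rw [hS, IndepFun.variance_sum (fun i _ => hY i)
      fun i _ j _ hij => (hindep hij).comp (measurable_mul_const _) (measurable_mul_const _),
      Finset.mul_sum]
    refine Finset.sum_le_sum fun i _ => ?_
    have hvarB : Var[B i; μ] ≤ K ^ 2 := by
      simpa using variance_le_sq_of_bounded ((hbdd i).mono fun _ h => abs_le.mp h) (hmeas i)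
    rw [variance_mul_const]
    nlinarith [sq_nonneg (a i)]
  calc ∫ ω, |S ω| ∂μ ≤ √(∫ ω, S ω ^ 2 ∂μ) := integral_abs_le_sqrt_integral_sq hS2
    _ = √(Var[S; μ]) := by rw [variance_eq_sub hS2, hmeanS]; simp
    _ ≤ √(K ^ 2 * ∑ i, a i ^ 2) := Real.sqrt_le_sqrt hvar
    _ = K * √(∑ i, a i ^ 2) := by rw [Real.sqrt_mul' _ (by positivity), Real.sqrt_sq hK]

end Probability

theorem sum_abs_inv_mul_le {n : ℕ} {c : Fin n → ℝ} {C : ℝ} (hC : 0 ≤ C) (hc : ∀ i, |c i| ≤ C) :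
    ∑ i, |(n : ℝ)⁻¹ * c i| ≤ C :=
  calc ∑ i, |(n : ℝ)⁻¹ * c i| ≤ ∑ _i : Fin n, (n : ℝ)⁻¹ * C := by
        refine Finset.sum_le_sum fun i _ => ?_
        rw [abs_mul, abs_inv, Nat.abs_cast]
        exact mul_le_mul_of_nonneg_left (hc i) (by positivity)
    _ = n * (n : ℝ)⁻¹ * C := by simp [mul_assoc]
    _ ≤ C := mul_le_of_le_one_left hC mul_inv_le_one

theorem sum_inv_mul_sq_le {n : ℕ} {c : Fin n → ℝ} {C : ℝ} (hc : ∀ i, |c i| ≤ C) :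
    ∑ i, ((n : ℝ)⁻¹ * c i) ^ 2 ≤ C ^ 2 / n :=
  calc ∑ i, ((n : ℝ)⁻¹ * c i) ^ 2 ≤ ∑ _i : Fin n, ((n : ℝ)⁻¹) ^ 2 * C ^ 2 := by
        refine Finset.sum_le_sum fun i _ => ?_
        rw [mul_pow]
        exact mul_le_mul_of_nonneg_left (sq_le_sq' (abs_le.mp (hc i)).1 (abs_le.mp (hc i)).2)
          (by positivity)
    _ = C ^ 2 / n := by
        rcases n.eq_zero_or_pos with rfl | _
        · simp
        · simp only [Finset.sum_const, Finset.card_univ, Fintype.card_fin, nsmul_eq_mul]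
          field_simp

section SampleMean

variable {Ω : Type*} {n : ℕ}

noncomputable def sampleMean (B : Fin n → Ω → ℝ) (f : Fin n → ℝ → ℝ) (t : ℝ) (ω : Ω) : ℝ :=
  (n : ℝ)⁻¹ * ∑ i, B i ω * f i t

theorem sampleMean_sub (B : Fin n → Ω → ℝ) (f : Fin n → ℝ → ℝ) (s t : ℝ) (ω : Ω) :
    sampleMean B f t ω - sampleMean B f s ω
      = ∑ i, B i ω * ((n : ℝ)⁻¹ * (f i t - f i s)) := by
  simp only [sampleMean, Finset.mul_sum, ← Finset.sum_sub_distrib]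
  exact Finset.sum_congr rfl fun _ _ => by ring

theorem abs_sampleMean_sub_le {B : Fin n → Ω → ℝ} {f : Fin n → ℝ → ℝ} {K L s t : ℝ} {ω : Ω}
    (hK : 0 ≤ K) (hL : 0 ≤ L) (hB : ∀ i, |B i ω| ≤ K) (hf : ∀ i, |f i t - f i s| ≤ L * |t - s|) :
    |sampleMean B f t ω - sampleMean B f s ω| ≤ K * L * |t - s| := by
  rw [sampleMean_sub, mul_assoc]
  calc |∑ i, B i ω * ((n : ℝ)⁻¹ * (f i t - f i s))|
      ≤ ∑ i, K * |(n : ℝ)⁻¹ * (f i t - f i s)| := by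
        refine (Finset.abs_sum_le_sum_abs _ _).trans (Finset.sum_le_sum fun i _ => ?_)
        rw [abs_mul]
        exact mul_le_mul_of_nonneg_right (hB i) (abs_nonneg _)
    _ ≤ K * (L * |t - s|) := by
        rw [← Finset.mul_sum]
        exact mul_le_mul_of_nonneg_left (sum_abs_inv_mul_le (by positivity) hf) hK

theorem integral_abs_sampleMean_sub_le [MeasurableSpace Ω] {μ : Measure Ω} [IsProbabilityMeasure μ]
    {B : Fin n → Ω → ℝ} {f : Fin n → ℝ → ℝ} {K L s t : ℝ} (hK : 0 ≤ K) (hL : 0 ≤ L)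
    (hmeas : ∀ i, AEMeasurable (B i) μ) (hindep : Pairwise fun i j => IndepFun (B i) (B j) μ)
    (hbdd : ∀ i, ∀ᵐ ω ∂μ, |B i ω| ≤ K) (hmean : ∀ i, ∫ ω, B i ω ∂μ = 0)
    (hf : ∀ i, |f i t - f i s| ≤ L * |t - s|) :
    ∫ ω, |sampleMean B f t ω - sampleMean B f s ω| ∂μ ≤ K * L / √n * |t - s| := by
  simp only [sampleMean_sub]
  calc _ ≤ K * √(∑ i, ((n : ℝ)⁻¹ * (f i t - f i s)) ^ 2) :=
        integral_abs_sum_mul_le hK hmeas hindep hbdd hmean _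
    _ ≤ K * √((L * |t - s|) ^ 2 / n) := by gcongr; exact sum_inv_mul_sq_le hf
    _ = K * L / √n * |t - s| := by
        rw [Real.sqrt_div' _ n.cast_nonneg, Real.sqrt_sq (by positivity)]
        ring

end SampleMean

theorem expected_sup_bound_lipschitz_sum :
    ∃ C : ℝ, 0 < C ∧
      ∀ (Ω : Type) (_ : MeasurableSpace Ω) (μ : Measure Ω),
        IsProbabilityMeasure μ →
        ∀ (n : ℕ), 0 < n →
        ∀ (B : Fin n → Ω → ℝ) (K L t₀ : ℝ), 0 < K → 0 ≤ L → 0 < t₀ →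
        (∀ i, Measurable (B i)) →
        ProbabilityTheory.iIndepFun B μ →
        (∀ i, ∀ᵐ ω ∂μ, |B i ω| ≤ K) →
        (∀ i, ∫ ω, B i ω ∂μ = 0) →
        ∀ (f : Fin n → ℝ → ℝ),
        (∀ i, ∀ s ∈ Set.Icc (-t₀) t₀, ∀ t ∈ Set.Icc (-t₀) t₀,
          |f i t - f i s| ≤ L * |t - s|) →
        (∀ i, f i 0 = 0) →
        ∫ ω, (⨆ t : Set.Icc (-t₀) t₀, |(n : ℝ)⁻¹ * ∑ i, B i ω * f i (t : ℝ)|) ∂μ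
          ≤ C * K * L * t₀ / Real.sqrt n := by
  refine ⟨2, two_pos, ?_⟩
  intro Ω _ μ _ n _ B K L t₀ hK hL ht₀ hmeas hindep hbdd hmean f hlip hf0
  have hint : ∀ t, Integrable (sampleMean B f t) μ := fun t =>
    (integrable_finsetSum _ fun i _ => (Integrable.of_bound (hmeas i).aestronglyMeasurable K
      (hbdd i)).mul_const _).const_mul _
  have hpath : ∀ᵐ ω ∂μ, ∀ s ∈ Icc (-t₀) t₀, ∀ t ∈ Icc (-t₀) t₀,
      |sampleMean B f t ω - sampleMean B f s ω| ≤ K * L * |t - s| := by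
    filter_upwards [ae_all_iff.mpr hbdd] with ω hω s hs t ht
    exact abs_sampleMean_sub_le hK.le hL hω fun i => hlip i s hs t ht
  have hinc : ∀ s ∈ Icc (-t₀) t₀, ∀ t ∈ Icc (-t₀) t₀,
      ∫ ω, |sampleMean B f t ω - sampleMean B f s ω| ∂μ ≤ K * L / √n * |t - s| :=
    fun s hs t ht => integral_abs_sampleMean_sub_le hK.le hL (fun i => (hmeas i).aemeasurable)
      (fun _ _ hij => hindep.indepFun hij) hbdd hmean fun i => hlip i s hs t ht
  have key := integral_iSup_abs_sub_le (by linarith) (by positivity) hint hpath hinc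
    (u := 0) ⟨by linarith, ht₀.le⟩
  simp only [sampleMean, hf0, mul_zero, Finset.sum_const_zero, sub_zero] at key
  calc _ ≤ K * L / √n * (t₀ - -t₀) := key
    _ = 2 * K * L * t₀ / √n := by ring
end
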